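/- arXiv:2003.02513 — 8 statements merged into one kernel-verified Lean document; each statement's English description precedes it below -/
import Mathlib

section
/- Let m, n be positive integers, let d ∈ ℝ^m satisfy d_i ≥ d̲ > 0 for all i, and let (r_j, a_j) ∈ ℝ × ℝ^m for j = 1,…,n satisfy |r_j| ≤ r̄ for all j. If p* ∈ ℝ^m satisfies p* ≥ 0 and p* minimizes f_n(p) = dᵀp + (1/n)·Σ_{j=1}^n (r_j − a_jᵀp)⁺ over the set {p ∈ ℝ^m : p ≥ 0}, then ‖p*‖₂ ≤ r̄/d̲. -/
/-- If `p*` minimizes the SAA dual objective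
`f_n(p) = dᵀp + (1/n) Σ_j (r_j - a_jᵀp)⁺` over the nonnegative orthant, and `d_i ≥ d̲ > 0`
and `|r_j| ≤ r̄`, then `‖p*‖₂ ≤ r̄ / d̲`. -/
theorem stmt0 (m n : ℕ) (hm : 0 < m) (hn : 0 < n)
    (d : Fin m → ℝ) (dlb : ℝ) (hdlb : 0 < dlb) (hd : ∀ i, dlb ≤ d i)
    (r : Fin n → ℝ) (a : Fin n → Fin m → ℝ)
    (rbar : ℝ) (hr : ∀ j, |r j| ≤ rbar)
    (pstar : Fin m → ℝ) (hpos : ∀ i, 0 ≤ pstar i)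
    (hopt : ∀ p : Fin m → ℝ, (∀ i, 0 ≤ p i) →
      (∑ i, d i * pstar i) + (1 / (n : ℝ)) * ∑ j, max (r j - ∑ i, a j i * pstar i) 0 ≤
      (∑ i, d i * p i) + (1 / (n : ℝ)) * ∑ j, max (r j - ∑ i, a j i * p i) 0) :
    Real.sqrt (∑ i, (pstar i) ^ 2) ≤ rbar / dlb := by
  have hn' : (0:ℝ) < n := by exact_mod_cast hn
  have h0 := hopt (fun _ => 0) (fun _ => le_refl 0)
  simp only [mul_zero, Finset.sum_const_zero, sub_zero, zero_add] at h0
  -- f(0) ≤ rbar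
  have hf0 : (1 / (n : ℝ)) * ∑ j, max (r j) 0 ≤ rbar := by
    have h1 : ∀ j : Fin n, max (r j) 0 ≤ rbar := by
      intro j
      rcases le_total (r j) 0 with h | h
      · simp [max_eq_right h]
        calc (0:ℝ) ≤ |r j| := abs_nonneg _
        _ ≤ rbar := hr j
      · rw [max_eq_left h]
        exact (le_abs_self _).trans (hr j)
    calc (1 / (n : ℝ)) * ∑ j, max (r j) 0 ≤ (1 / (n : ℝ)) * ∑ _j : Fin n, rbar := by
          apply mul_le_mul_of_nonneg_left (Finset.sum_le_sum fun j _ => h1 j)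
          positivity
      _ = rbar := by field_simp; simp
  -- dᵀp* ≤ f(p*)
  have hd1 : (∑ i, d i * pstar i) ≤ (∑ i, d i * pstar i) +
      (1 / (n : ℝ)) * ∑ j, max (r j - ∑ i, a j i * pstar i) 0 := by
    have : (0:ℝ) ≤ (1 / (n : ℝ)) * ∑ j, max (r j - ∑ i, a j i * pstar i) 0 := by
      apply mul_nonneg (by positivity)
      exact Finset.sum_nonneg fun j _ => le_max_right _ _
    linarith
  -- dlb * Σ p*_i ≤ dᵀp*
  have hd2 : dlb * ∑ i, pstar i ≤ ∑ i, d i * pstar i := by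
    rw [Finset.mul_sum]
    exact Finset.sum_le_sum fun i _ => mul_le_mul_of_nonneg_right (hd i) (hpos i)
  have key : dlb * ∑ i, pstar i ≤ rbar := le_trans hd2 (le_trans hd1 (le_trans h0 hf0))
  have hs : ∑ i, pstar i ≤ rbar / dlb := (le_div_iff₀' hdlb).mpr key
  -- sqrt(Σ p² ) ≤ Σ p
  have hsq : Real.sqrt (∑ i, (pstar i) ^ 2) ≤ ∑ i, pstar i := by
    rw [show (∑ i, pstar i) = Real.sqrt ((∑ i, pstar i)^2) from
      (Real.sqrt_sq (Finset.sum_nonneg fun i _ => hpos i)).symm]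
    apply Real.sqrt_le_sqrt
    calc ∑ i, (pstar i) ^ 2 ≤ ∑ i, pstar i * ∑ k, pstar k := by
          apply Finset.sum_le_sum
          intro i _
          rw [sq]
          exact mul_le_mul_of_nonneg_left
            (Finset.single_le_sum (fun k _ => hpos k) (Finset.mem_univ i)) (hpos i)
      _ = (∑ i, pstar i)^2 := by rw [← Finset.sum_mul, sq]
  exact hsq.trans hs
end

section
/- Consider the Simple Online Algorithm: given data (r_j, a_j) ∈ ℝ × ℝ^m for j = 1,…,n, a vector d ∈ ℝ^m, and step sizes γ_t > 0, define p_1 = 0 ∈ ℝ^m and, for t = 1,…,n, x_t = 1 if r_t > a_tᵀp_t and x_t = 0 otherwise, and p_{t+1} = (p_t + γ_t(a_t x_t − d)) ∨ 0, where ∨ denotes the componentwise maximum. Suppose |r_t| ≤ r̄, ‖a_t‖_∞ ≤ ā, and 0 < d̲ ≤ d_i ≤ d̄ for all i. If γ_t ≤ 1 and ‖p_t‖₂ ≥ (2r̄ + m(ā + d̄)²)/d̲, then ‖p_{t+1}‖₂ ≤ ‖p_t‖₂. -/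
/-- The dual-price iterates of the Simple Online Algorithm: `p 0 = 0` and
`p (t+1) = (p t + γ t • (a t * x t - d)) ∨ 0` componentwise, where
`x t = 1` if `r t > a tᵀ p t` and `x t = 0` otherwise. -/
noncomputable def pIter (m : ℕ) (r : ℕ → ℝ) (a : ℕ → Fin m → ℝ) (d : Fin m → ℝ)
    (γ : ℕ → ℝ) : ℕ → Fin m → ℝ
  | 0 => 0
  | t + 1 => fun i =>
      max (pIter m r a d γ t i
        + γ t * (a t i * (if (∑ k, a t k * pIter m r a d γ t k) < r t then 1 else 0) - d i)) 0

/-- The primal decisions of the Simple Online Algorithm: `x t = 1` if `r t > a tᵀ p t`,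
`x t = 0` otherwise. -/
noncomputable def xIter (m : ℕ) (r : ℕ → ℝ) (a : ℕ → Fin m → ℝ) (d : Fin m → ℝ)
    (γ : ℕ → ℝ) (t : ℕ) : ℝ :=
  if (∑ k, a t k * pIter m r a d γ t k) < r t then 1 else 0

/-- If `γ t ≤ 1` and `‖p t‖₂ ≥ (2 r̄ + m (ā + d̄)²)/d̲`, then the
Euclidean norm of the dual iterate does not increase: `‖p (t+1)‖₂ ≤ ‖p t‖₂`. -/
theorem stmt2 (m n : ℕ) (r : ℕ → ℝ) (a : ℕ → Fin m → ℝ) (d : Fin m → ℝ) (γ : ℕ → ℝ)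
    (hγpos : ∀ t, 0 < γ t) (rbar abar dlb dbar : ℝ) (hdlb : 0 < dlb)
    (hr : ∀ t < n, |r t| ≤ rbar) (ha : ∀ t < n, ∀ i, |a t i| ≤ abar)
    (hd : ∀ i, dlb ≤ d i ∧ d i ≤ dbar)
    (t : ℕ) (ht : t < n) (hγ1 : γ t ≤ 1)
    (hlarge : (2 * rbar + m * (abar + dbar) ^ 2) / dlb ≤
      Real.sqrt (∑ i, (pIter m r a d γ t i) ^ 2)) :
    Real.sqrt (∑ i, (pIter m r a d γ (t + 1) i) ^ 2) ≤
      Real.sqrt (∑ i, (pIter m r a d γ t i) ^ 2) := by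
  set p := pIter m r a d γ t with hp
  have hpnn : ∀ i, 0 ≤ p i := by
    intro i
    rw [hp]
    cases t with
    | zero => simp [pIter]
    | succ s => exact le_max_right _ _
  set x : ℝ := if (∑ k, a t k * p k) < r t then 1 else 0 with hx
  set g : Fin m → ℝ := fun i => a t i * x - d i with hg
  have hsucc : ∀ i, pIter m r a d γ (t + 1) i = max (p i + γ t * g i) 0 := fun i => rfl
  set S := Real.sqrt (∑ i, p i ^ 2) with hS
  have hSnn : 0 ≤ S := Real.sqrt_nonneg _
  have hS2 : S ^ 2 = ∑ i, p i ^ 2 := Real.sq_sqrt (by positivity)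
  have hγ := hγpos t
  have hrbar : 0 ≤ rbar := le_trans (abs_nonneg _) (hr t ht)
  have hsum_ge : S ≤ ∑ i, p i := by
    have h1 : (∑ i, p i ^ 2) ≤ (∑ i, p i) ^ 2 :=
      Finset.sum_sq_le_sq_sum_of_nonneg (fun i _ => hpnn i)
    calc S ≤ Real.sqrt ((∑ i, p i) ^ 2) := Real.sqrt_le_sqrt h1
      _ = ∑ i, p i := Real.sqrt_sq (Finset.sum_nonneg fun i _ => hpnn i)
  have hx01 : |x| ≤ 1 := by rw [hx]; split <;> norm_num
  -- inner product bound
  have h1 : x * (∑ k, a t k * p k) ≤ rbar := by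
    rw [hx]; split
    · rename_i h
      simpa using le_trans h.le (le_trans (le_abs_self _) (hr t ht))
    · simpa using hrbar
  have h2 : dlb * S ≤ ∑ i, d i * p i := by
    calc dlb * S ≤ dlb * ∑ i, p i := by
          exact mul_le_mul_of_nonneg_left hsum_ge hdlb.le
      _ = ∑ i, dlb * p i := Finset.mul_sum _ _ _
      _ ≤ ∑ i, d i * p i := by
          apply Finset.sum_le_sum
          intro i _
          exact mul_le_mul_of_nonneg_right (hd i).1 (hpnn i)
  have hpg : ∑ i, p i * g i = x * (∑ k, a t k * p k) - ∑ i, d i * p i := by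
    rw [Finset.mul_sum, ← Finset.sum_sub_distrib]
    exact Finset.sum_congr rfl fun i _ => by rw [hg]; ring
  have hA : ∑ i, p i * g i ≤ rbar - dlb * S := by rw [hpg]; linarith
  -- gradient bound
  have hB : ∑ i, g i ^ 2 ≤ m * (abar + dbar) ^ 2 := by
    calc ∑ i, g i ^ 2 ≤ ∑ _i : Fin m, (abar + dbar) ^ 2 := by
          apply Finset.sum_le_sum
          intro i _
          have hgi : |g i| ≤ abar + dbar := by
            rw [hg]
            calc |a t i * x - d i| ≤ |a t i * x| + |d i| := abs_sub _ _
              _ ≤ abar + dbar := by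
                  have h3 : |a t i * x| ≤ abar := by
                    rw [abs_mul]
                    calc |a t i| * |x| ≤ abar * 1 :=
                          mul_le_mul (ha t ht i) hx01 (abs_nonneg _)
                            (le_trans (abs_nonneg _) (ha t ht i))
                      _ = abar := mul_one _
                  have h4 : |d i| ≤ dbar := by
                    rw [abs_of_nonneg (le_trans hdlb.le (hd i).1)]
                    exact (hd i).2
                  linarith
          calc g i ^ 2 = |g i| ^ 2 := (sq_abs _).symm
            _ ≤ (abar + dbar) ^ 2 :=
                pow_le_pow_left₀ (abs_nonneg _) hgi 2
      _ = m * (abar + dbar) ^ 2 := by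
          simp [Finset.sum_const, Finset.card_univ, nsmul_eq_mul]
  have hBnn : 0 ≤ ∑ i, g i ^ 2 := by positivity
  have hlarge' : 2 * rbar + m * (abar + dbar) ^ 2 ≤ dlb * S := by
    rw [div_le_iff₀ hdlb] at hlarge
    linarith [hlarge]
  have hexp : ∑ i, (p i + γ t * g i) ^ 2
      = (∑ i, p i ^ 2) + 2 * γ t * (∑ i, p i * g i) + γ t ^ 2 * (∑ i, g i ^ 2) := by
    rw [Finset.mul_sum, Finset.mul_sum, ← Finset.sum_add_distrib, ← Finset.sum_add_distrib]
    exact Finset.sum_congr rfl fun i _ => by ring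
  have hkey : ∑ i, (p i + γ t * g i) ^ 2 ≤ ∑ i, p i ^ 2 := by
    rw [hexp]
    have e1 : 2 * γ t * (∑ i, p i * g i) ≤ 2 * γ t * (rbar - dlb * S) :=
      mul_le_mul_of_nonneg_left hA (by positivity)
    have e2 : γ t ^ 2 * (∑ i, g i ^ 2) ≤ γ t * (m * (abar + dbar) ^ 2) := by
      calc γ t ^ 2 * (∑ i, g i ^ 2) ≤ γ t ^ 2 * (m * (abar + dbar) ^ 2) :=
            mul_le_mul_of_nonneg_left hB (by positivity)
        _ ≤ γ t * (m * (abar + dbar) ^ 2) := by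
            have hM : (0:ℝ) ≤ (m : ℝ) * (abar + dbar) ^ 2 := by positivity
            nlinarith [mul_nonneg (mul_nonneg hγ.le (sub_nonneg.2 hγ1)) hM]
    have e3 : γ t * (2 * rbar + m * (abar + dbar) ^ 2) ≤ γ t * (dlb * S) :=
      mul_le_mul_of_nonneg_left hlarge' hγ.le
    nlinarith [e1, e2, e3, mul_nonneg (mul_nonneg hγ.le hdlb.le) hSnn]
  have hmax : ∑ i, (pIter m r a d γ (t + 1) i) ^ 2 ≤ ∑ i, (p i + γ t * g i) ^ 2 := by
    apply Finset.sum_le_sum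
    intro i _
    rw [hsucc i]
    rcases le_or_gt 0 (p i + γ t * g i) with h | h
    · rw [max_eq_left h]
    · rw [max_eq_right h.le]; simpa using sq_nonneg (p i + γ t * g i)
  exact Real.sqrt_le_sqrt (le_trans hmax hkey)
end

section
/- Consider the Simple Online Algorithm: given data (r_j, a_j) ∈ ℝ × ℝ^m for j = 1,…,n, a vector d ∈ ℝ^m, and step sizes γ_t > 0, define p_1 = 0 ∈ ℝ^m and, for t = 1,…,n, x_t = 1 if r_t > a_tᵀp_t and x_t = 0 otherwise, and p_{t+1} = (p_t + γ_t(a_t x_t − d)) ∨ 0, where ∨ denotes the componentwise maximum. Suppose |r_j| ≤ r̄ and ‖a_j‖_∞ ≤ ā for all j, 0 < d̲ ≤ d_i ≤ d̄ for all i, and γ_t ≤ 1 for all t. Then for every t = 1,…,n+1: ‖p_t‖₂ ≤ (2r̄ + m(ā + d̄)²)/d̲ + m(ā + d̄). -/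
set_option maxHeartbeats 1600000

/-- (Lemmas 1 and 2 of the paper, deterministic content.)
If `|r_j| ≤ r̄`, `‖a_j‖_∞ ≤ ā`, `0 < d̲ ≤ d_i ≤ d̄` and `0 < γ_t ≤ 1`, then every dual
iterate satisfies `‖p_t‖₂ ≤ (2 r̄ + m (ā + d̄)²)/d̲ + m (ā + d̄)`. -/
theorem stmt3 (m n : ℕ) (hn : 0 < n) (r : ℕ → ℝ) (a : ℕ → Fin m → ℝ) (d : Fin m → ℝ)
    (γ : ℕ → ℝ) (hγ : ∀ t < n, 0 < γ t ∧ γ t ≤ 1)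
    (rbar abar dlb dbar : ℝ) (hdlb : 0 < dlb)
    (hr : ∀ j < n, |r j| ≤ rbar) (ha : ∀ j < n, ∀ i, |a j i| ≤ abar)
    (hd : ∀ i, dlb ≤ d i ∧ d i ≤ dbar) :
    ∀ t ≤ n, Real.sqrt (∑ i, (pIter m r a d γ t i) ^ 2) ≤
      (2 * rbar + m * (abar + dbar) ^ 2) / dlb + m * (abar + dbar) := by
  have hrbar : 0 ≤ rbar := (abs_nonneg _).trans (hr 0 hn)
  set p := pIter m r a d γ with hp
  have hpnn : ∀ t i, 0 ≤ p t i := by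
    intro t i
    cases t with
    | zero => simp [hp, pIter]
    | succ t => exact le_max_right _ _
  -- trivial case m = 0
  rcases Nat.eq_zero_or_pos m with hm | hm
  · subst hm
    intro t _
    have h0 : (∑ i : Fin 0, p t i ^ 2) = 0 := by simp
    rw [h0, Real.sqrt_zero]
    simp only [Nat.cast_zero, zero_mul, add_zero]
    have : (0:ℝ) ≤ 2 * rbar / dlb := div_nonneg (by linarith) hdlb.le
    linarith
  -- main case m ≥ 1
  set c : ℝ := abar + dbar with hc
  have habar : 0 ≤ abar := (abs_nonneg _).trans (ha 0 hn ⟨0, hm⟩)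
  have hdbar : dlb ≤ dbar := le_trans (hd ⟨0, hm⟩).1 (hd ⟨0, hm⟩).2
  have hcnn : 0 ≤ c := by simp only [hc]; linarith
  have hm1 : (1:ℝ) ≤ m := by exact_mod_cast hm
  set K : ℝ := (2 * rbar + m * c ^ 2) / (2 * dlb) + Real.sqrt m * c with hK
  have hmc2 : (0:ℝ) ≤ (m:ℝ) * c ^ 2 := by positivity
  have hKnn : 0 ≤ K := by
    have : (0:ℝ) ≤ (2 * rbar + m * c ^ 2) / (2 * dlb) :=
      div_nonneg (by linarith) (by linarith)
    have : (0:ℝ) ≤ Real.sqrt m * c := mul_nonneg (Real.sqrt_nonneg _) hcnn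
    positivity
  have hKle : K ≤ (2 * rbar + m * c ^ 2) / dlb + m * c := by
    have h1 : (2 * rbar + m * c ^ 2) / (2 * dlb) ≤ (2 * rbar + m * c ^ 2) / dlb := by
      apply div_le_div_of_nonneg_left (by linarith) hdlb (by linarith)
    have h2 : Real.sqrt m ≤ (m:ℝ) := by
      have : Real.sqrt ((m:ℝ)) ≤ Real.sqrt ((m:ℝ) ^ 2) :=
        Real.sqrt_le_sqrt (by nlinarith)
      rwa [Real.sqrt_sq (by positivity)] at this
    have h3 : Real.sqrt m * c ≤ (m:ℝ) * c := mul_le_mul_of_nonneg_right h2 hcnn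
    rw [hK]
    exact add_le_add h1 h3
  have key : ∀ t, t ≤ n → Real.sqrt (∑ i, p t i ^ 2) ≤ K := by
    intro t
    induction t with
    | zero =>
      intro _
      have h0 : (∑ i, p 0 i ^ 2) = 0 := by simp [hp, pIter]
      rw [h0, Real.sqrt_zero]; exact hKnn
    | succ t ih =>
      intro ht
      have htn : t < n := ht
      have ihK := ih htn.le
      obtain ⟨hγ0, hγ1⟩ := hγ t htn
      set X : ℝ := if (∑ k, a t k * p t k) < r t then 1 else 0 with hX
      have hX0 : 0 ≤ X := by rw [hX]; split <;> norm_num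
      have hX1 : X ≤ 1 := by rw [hX]; split <;> norm_num
      set q : Fin m → ℝ := fun i => a t i * X - d i with hq
      set S : ℝ := ∑ i, p t i ^ 2 with hS
      set Q : ℝ := ∑ i, q i ^ 2 with hQdef
      set P : ℝ := ∑ i, p t i * q i with hP
      have hSnn : 0 ≤ S := Finset.sum_nonneg fun i _ => sq_nonneg _
      have hQnn : 0 ≤ Q := Finset.sum_nonneg fun i _ => sq_nonneg _
      set s : ℝ := Real.sqrt S with hs
      have hsnn : 0 ≤ s := Real.sqrt_nonneg _
      have hs2 : s ^ 2 = S := Real.sq_sqrt hSnn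
      -- step 1: new sum of squares bounded by pre-projection sum
      have h1 : (∑ i, p (t+1) i ^ 2) ≤ ∑ i, (p t i + γ t * q i) ^ 2 := by
        apply Finset.sum_le_sum
        intro i _
        have hpe : p (t+1) i = max (p t i + γ t * q i) 0 := rfl
        rw [hpe]
        have h01 : max (p t i + γ t * q i) 0 ≤ |p t i + γ t * q i| :=
          max_le (le_abs_self _) (abs_nonneg _)
        have h02 : -|p t i + γ t * q i| ≤ max (p t i + γ t * q i) 0 :=
          le_trans (by simp [abs_nonneg]) (le_max_right _ _)
        calc (max (p t i + γ t * q i) 0) ^ 2 ≤ |p t i + γ t * q i| ^ 2 :=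
              sq_le_sq' h02 h01
          _ = (p t i + γ t * q i) ^ 2 := sq_abs _
      -- step 2: expansion
      have h2 : (∑ i, (p t i + γ t * q i) ^ 2) = S + 2 * γ t * P + γ t ^ 2 * Q := by
        rw [hS, hP, hQdef, Finset.mul_sum, Finset.mul_sum, ← Finset.sum_add_distrib,
          ← Finset.sum_add_distrib]
        apply Finset.sum_congr rfl
        intros; ring
      -- bound on Q
      have hQ : Q ≤ m * c ^ 2 := by
        rw [hQdef]
        calc (∑ i, q i ^ 2) ≤ ∑ _i : Fin m, c ^ 2 := by
              apply Finset.sum_le_sum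
              intro i _
              have haX : |a t i * X| ≤ abar := by
                rw [abs_mul]
                calc |a t i| * |X| ≤ abar * 1 :=
                      mul_le_mul (ha t htn i) (by rw [abs_of_nonneg hX0]; exact hX1)
                        (abs_nonneg _) habar
                  _ = abar := mul_one _
              obtain ⟨hd1, hd2⟩ := hd i
              obtain ⟨hl, hu⟩ := abs_le.mp haX
              have : -c ≤ q i ∧ q i ≤ c := by
                constructor <;> (simp only [hq, hc]; nlinarith)
              exact sq_le_sq' this.1 this.2
          _ = m * c ^ 2 := by simp [Finset.card_univ, mul_comm]
      -- bound on P (drift)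
      have hsum : s ≤ ∑ i, p t i := by
        have h01 : S ≤ (∑ i, p t i) ^ 2 :=
          Finset.sum_sq_le_sq_sum_of_nonneg fun i _ => hpnn t i
        have := Real.sqrt_le_sqrt h01
        rwa [Real.sqrt_sq (Finset.sum_nonneg fun i _ => hpnn t i)] at this
      have hXA : X * (∑ k, a t k * p t k) ≤ rbar := by
        rw [hX]
        split
        · rename_i hlt
          rw [one_mul]
          exact le_trans hlt.le (le_trans (le_abs_self _) (hr t htn))
        · rw [zero_mul]; exact hrbar
      have hdp : dlb * (∑ i, p t i) ≤ ∑ i, d i * p t i := by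
        rw [Finset.mul_sum]
        apply Finset.sum_le_sum
        intro i _
        exact mul_le_mul_of_nonneg_right (hd i).1 (hpnn t i)
      have hPdrift : P ≤ rbar - dlb * s := by
        have hPe : P = X * (∑ k, a t k * p t k) - ∑ i, d i * p t i := by
          rw [hP, Finset.mul_sum, ← Finset.sum_sub_distrib]
          apply Finset.sum_congr rfl
          intros; simp only [hq]; ring
        have h01 : dlb * s ≤ dlb * (∑ i, p t i) :=
          mul_le_mul_of_nonneg_left hsum hdlb.le
        rw [hPe]
        linarith
      -- Cauchy-Schwarz bound on P
      have hPCS : P ≤ s * Real.sqrt Q := by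
        have h01 : P ^ 2 ≤ S * Q := by
          simpa [hS, hQdef, hP] using
            Finset.sum_mul_sq_le_sq_mul_sq Finset.univ (fun i => p t i) q
        calc P ≤ |P| := le_abs_self _
          _ = Real.sqrt (P ^ 2) := (Real.sqrt_sq_eq_abs _).symm
          _ ≤ Real.sqrt (S * Q) := Real.sqrt_le_sqrt h01
          _ = s * Real.sqrt Q := by rw [Real.sqrt_mul hSnn]
      by_cases hcase : (2 * rbar + m * c ^ 2) / (2 * dlb) ≤ s
      · -- large iterate: norm does not increase
        have hbig : 2 * rbar + m * c ^ 2 ≤ s * (2 * dlb) :=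
          (div_le_iff₀ (by linarith)).mp hcase
        have hstep : (∑ i, p (t+1) i ^ 2) ≤ S := by
          have hA : γ t * P ≤ γ t * (rbar - dlb * s) :=
            mul_le_mul_of_nonneg_left hPdrift hγ0.le
          have hB : γ t ^ 2 * Q ≤ γ t ^ 2 * ((m:ℝ) * c ^ 2) :=
            mul_le_mul_of_nonneg_left hQ (sq_nonneg (γ t))
          have hg2 : γ t ^ 2 ≤ γ t := by nlinarith
          have hC : γ t ^ 2 * ((m:ℝ) * c ^ 2) ≤ γ t * ((m:ℝ) * c ^ 2) :=
            mul_le_mul_of_nonneg_right hg2 hmc2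
          have hD : γ t * (2 * rbar + (m:ℝ) * c ^ 2) ≤ γ t * (s * (2 * dlb)) :=
            mul_le_mul_of_nonneg_left hbig hγ0.le
          have h3 : S + 2 * γ t * P + γ t ^ 2 * Q ≤ S := by nlinarith [hA, hB, hC, hD]
          linarith [h1, h2.le]
        calc Real.sqrt (∑ i, p (t+1) i ^ 2) ≤ Real.sqrt S := Real.sqrt_le_sqrt hstep
          _ ≤ K := ihK
      · -- small iterate: increases by at most √m c
        push_neg at hcase
        have hsq : Real.sqrt Q ≤ Real.sqrt m * c := by
          calc Real.sqrt Q ≤ Real.sqrt ((m:ℝ) * c ^ 2) := Real.sqrt_le_sqrt hQ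
            _ = Real.sqrt m * c := by
                rw [Real.sqrt_mul (by positivity), Real.sqrt_sq hcnn]
        have hQs : 0 ≤ Real.sqrt Q := Real.sqrt_nonneg _
        have hQ2 : Real.sqrt Q ^ 2 = Q := Real.sq_sqrt hQnn
        have hstep : (∑ i, p (t+1) i ^ 2) ≤ (s + Real.sqrt Q) ^ 2 := by
          have hA : γ t * P ≤ γ t * (s * Real.sqrt Q) :=
            mul_le_mul_of_nonneg_left hPCS hγ0.le
          have hB : γ t * (s * Real.sqrt Q) ≤ 1 * (s * Real.sqrt Q) :=
            mul_le_mul_of_nonneg_right hγ1 (mul_nonneg hsnn hQs)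
          have hg2 : γ t ^ 2 ≤ 1 := by nlinarith
          have hC : γ t ^ 2 * Q ≤ 1 * Q := mul_le_mul_of_nonneg_right hg2 hQnn
          have h3 : S + 2 * γ t * P + γ t ^ 2 * Q ≤ (s + Real.sqrt Q) ^ 2 := by
            nlinarith [hA, hB, hC, hs2, hQ2]
          linarith [h1, h2.le]
        calc Real.sqrt (∑ i, p (t+1) i ^ 2) ≤ Real.sqrt ((s + Real.sqrt Q) ^ 2) :=
              Real.sqrt_le_sqrt hstep
          _ = s + Real.sqrt Q := Real.sqrt_sq (by linarith)
          _ ≤ (2 * rbar + m * c ^ 2) / (2 * dlb) + Real.sqrt m * c := by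
              have := hsq; linarith
          _ = K := rfl
  intro t ht
  exact le_trans (key t ht) hKle
end

section
/- Consider the Simple Online Algorithm with step size γ_t = 1/√n: given data (r_j, a_j) ∈ ℝ × ℝ^m for j = 1,…,n and a vector d ∈ ℝ^m, define p_1 = 0 ∈ ℝ^m and, for t = 1,…,n, x_t = 1 if r_t > a_tᵀp_t and x_t = 0 otherwise, and p_{t+1} = (p_t + (1/√n)(a_t x_t − d)) ∨ 0, where ∨ denotes the componentwise maximum. Suppose |r_j| ≤ r̄ and ‖a_j‖_∞ ≤ ā for all j and 0 < d̲ ≤ d_i ≤ d̄ for all i. Then Σ_{t=1}^n a_t x_t ≤ n·d + √n·p_{n+1} componentwise, and consequently the constraint violation satisfies ‖(Σ_{t=1}^n a_t x_t − n·d)⁺‖₂ ≤ ((2r̄ + m(ā + d̄)²)/d̲ + m(ā + d̄))·√n. -/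
set_option maxHeartbeats 2000000 in
/-- (Constraint-violation bound of Theorems 1 and 2.) With step size
`γ_t = 1/√n`, the algorithm'\''s resource consumption satisfies
`Σ_t a_t x_t ≤ n d + √n p_{n+1}` componentwise, and hence
`‖(Σ_t a_t x_t − n d)⁺‖₂ ≤ ((2 r̄ + m (ā + d̄)²)/d̲ + m (ā + d̄)) √n`. -/
theorem stmt5 (m n : ℕ) (hn : 0 < n) (r : ℕ → ℝ) (a : ℕ → Fin m → ℝ) (d : Fin m → ℝ)
    (rbar abar dlb dbar : ℝ) (hdlb : 0 < dlb)
    (hr : ∀ j < n, |r j| ≤ rbar) (ha : ∀ j < n, ∀ i, |a j i| ≤ abar)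
    (hd : ∀ i, dlb ≤ d i ∧ d i ≤ dbar) :
    (∀ i, ∑ t ∈ Finset.range n, a t i * xIter m r a d (fun _ => 1 / Real.sqrt n) t ≤
        (n : ℝ) * d i + Real.sqrt n * pIter m r a d (fun _ => 1 / Real.sqrt n) n i) ∧
      Real.sqrt (∑ i, (max (∑ t ∈ Finset.range n,
            a t i * xIter m r a d (fun _ => 1 / Real.sqrt n) t - (n : ℝ) * d i) 0) ^ 2) ≤
        ((2 * rbar + m * (abar + dbar) ^ 2) / dlb + m * (abar + dbar)) * Real.sqrt n := by
  have hn1 : (1:ℝ) ≤ (n:ℝ) := by exact_mod_cast hn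
  have hsn : (0:ℝ) < Real.sqrt n := Real.sqrt_pos.2 (by linarith)
  have hsn1 : (1:ℝ) ≤ Real.sqrt n := by
    nlinarith [Real.sq_sqrt (by linarith : (0:ℝ) ≤ (n:ℝ))]
  set γ : ℕ → ℝ := fun _ => 1 / Real.sqrt n with hγ
  set p := pIter m r a d γ with hpdef
  set x := xIter m r a d γ with hxdef
  set g : ℝ := 1 / Real.sqrt n with hgdef
  have hγt : ∀ t, γ t = g := fun _ => rfl
  have hg0 : 0 < g := by positivity
  have hg1 : g ≤ 1 := by rw [hgdef, div_le_one hsn]; exact hsn1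
  have hsg : Real.sqrt n * g = 1 := by
    rw [hgdef]; field_simp
  -- basic facts
  have hp0 : ∀ i, p 0 i = 0 := fun i => rfl
  have hstep : ∀ t i, p (t+1) i = max (p t i + g * (a t i * x t - d i)) 0 := by
    intro t i
    rw [hpdef, hxdef]
    rfl
  have hpnn : ∀ t i, 0 ≤ p t i := by
    intro t i
    cases t with
    | zero => rw [hp0]
    | succ t => rw [hstep]; exact le_max_right _ _
  have hx01 : ∀ t, x t = 0 ∨ x t = 1 := by
    intro t
    rw [hxdef]; unfold xIter
    split_ifs <;> simp
  have hxle : ∀ t, x t = 1 → (∑ k, a t k * p t k) < r t := by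
    intro t h
    rw [hxdef] at h
    unfold xIter at h
    rw [← hpdef] at h
    split_ifs at h with hc
    · exact hc
    · norm_num at h
  -- Part 1
  have h1 : ∀ t i, (∑ s ∈ Finset.range t, g * (a s i * x s - d i)) ≤ p t i := by
    intro t i
    induction t with
    | zero => simp [hp0]
    | succ t ih =>
        rw [Finset.sum_range_succ, hstep]
        have := le_max_left (p t i + g * (a t i * x t - d i)) 0
        linarith
  have part1 : ∀ i, ∑ t ∈ Finset.range n, a t i * x t ≤ (n:ℝ) * d i + Real.sqrt n * p n i := by
    intro i
    have key : g * ((∑ t ∈ Finset.range n, a t i * x t) - (n:ℝ) * d i) ≤ p n i := by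
      have := h1 n i
      rw [← Finset.mul_sum, Finset.sum_sub_distrib, Finset.sum_const, Finset.card_range,
        nsmul_eq_mul] at this
      exact this
    have := mul_le_mul_of_nonneg_left key (le_of_lt hsn)
    rw [← mul_assoc, hsg, one_mul] at this
    linarith
  refine ⟨part1, ?_⟩
  -- constants
  set c : ℝ := abar + dbar with hcdef
  have hrbar0 : 0 ≤ rbar := le_trans (abs_nonneg _) (hr 0 hn)
  have hmc : 0 ≤ (m:ℝ) * c ∧ Real.sqrt ((m:ℝ) * c^2) ≤ (m:ℝ) * c := by
    rcases Nat.eq_zero_or_pos m with h0 | hm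
    · subst h0; simp
    · have hm1 : (1:ℝ) ≤ (m:ℝ) := by exact_mod_cast hm
      have hc0 : 0 ≤ c := by
        have h1 := le_trans (abs_nonneg _) (ha 0 hn ⟨0, hm⟩)
        have h2 := le_trans hdlb.le (le_trans (hd ⟨0, hm⟩).1 (hd ⟨0, hm⟩).2)
        rw [hcdef]; linarith
      constructor
      · positivity
      · rw [show (m:ℝ) * c^2 = ((m:ℝ)) * c^2 from rfl, Real.sqrt_mul (by positivity),
          Real.sqrt_sq hc0]
        have hsm : Real.sqrt m ≤ (m:ℝ) := by
          nlinarith [Real.sq_sqrt (by positivity : (0:ℝ) ≤ (m:ℝ)),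
            Real.sqrt_nonneg (m:ℝ)]
        nlinarith
  set B : ℝ := Real.sqrt ((m:ℝ) * c^2) with hBdef
  have hB0 : 0 ≤ B := Real.sqrt_nonneg _
  have hB2 : B^2 = (m:ℝ) * c^2 := Real.sq_sqrt (by positivity)
  set M : ℝ := (2 * rbar + (m:ℝ) * c^2) / dlb + (m:ℝ) * c with hMdef
  have hM0 : 0 ≤ M := by
    have h1 : 0 ≤ (2 * rbar + (m:ℝ) * c^2) / dlb := by positivity
    rw [hMdef]
    linarith [hmc.1]
  set Φ : ℕ → ℝ := fun t => ∑ i, (p t i)^2 with hΦdef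
  have hΦnn : ∀ t, 0 ≤ Φ t := fun t => Finset.sum_nonneg fun i _ => sq_nonneg _
  -- induction: Φ t ≤ M^2 for t ≤ n
  have hind : ∀ t, t ≤ n → Φ t ≤ M^2 := by
    intro t ht
    induction t with
    | zero => simp [hΦdef, hp0]; positivity
    | succ t ih =>
        have htn : t < n := ht
        have hΦt : Φ t ≤ M^2 := ih (le_of_lt htn)
        set v : Fin m → ℝ := fun i => a t i * x t - d i with hvdef
        set S : ℝ := Real.sqrt (Φ t) with hSdef
        have hS0 : 0 ≤ S := Real.sqrt_nonneg _
        have hS2 : S^2 = Φ t := Real.sq_sqrt (hΦnn t)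
        have hSM : S ≤ M := by
          nlinarith
        set Sp : ℝ := ∑ i, p t i with hSpdef
        set P : ℝ := ∑ i, p t i * v i with hPdef
        set V : ℝ := ∑ i, (v i)^2 with hVdef
        have hV0 : 0 ≤ V := Finset.sum_nonneg fun i _ => sq_nonneg _
        -- expansion bound
        have hexp : Φ (t+1) ≤ Φ t + 2*g*P + g^2*V := by
          have habs : ∀ w : ℝ, (max w 0)^2 ≤ w^2 := by
            intro w
            rcases le_total w 0 with h | h
            · rw [max_eq_right h]; nlinarith
            · rw [max_eq_left h]
          have h1 : Φ (t+1) ≤ ∑ i, (p t i + g * v i)^2 := by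
            apply Finset.sum_le_sum
            intro i _
            rw [hstep]
            exact habs _
          have h2 : ∑ i, (p t i + g * v i)^2 = Φ t + 2*g*P + g^2*V := by
            rw [hΦdef, hPdef, hVdef, Finset.mul_sum, Finset.mul_sum, ← Finset.sum_add_distrib,
              ← Finset.sum_add_distrib]
            apply Finset.sum_congr rfl
            intro i _
            ring
          linarith
        -- bound V
        have hVb : V ≤ (m:ℝ) * c^2 := by
          have : ∀ i ∈ Finset.univ, (v i)^2 ≤ c^2 := by
            intro i _
            have hai := abs_le.mp (ha t htn i)
            have hdi := hd i
            rcases hx01 t with h | h <;> rw [hvdef] <;> simp only [h] <;> nlinarith [hai.1, hai.2, hdi.1, hdi.2, hdlb, abs_nonneg (a t i), ha t htn i]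
          calc V ≤ ∑ _i : Fin m, c^2 := Finset.sum_le_sum this
            _ = (m:ℝ) * c^2 := by simp [mul_comm]
        -- bound P via reward
        have hPr : P ≤ rbar - dlb * Sp := by
          have ha1 : ∑ i, p t i * (a t i * x t) ≤ rbar := by
            rcases hx01 t with h | h
            · simpa [h] using hrbar0
            · have hlt := hxle t h
              have heq : ∑ i, p t i * (a t i * x t) = ∑ k, a t k * p t k := by
                rw [h]; apply Finset.sum_congr rfl; intro i _; ring
              rw [heq]
              have := (abs_le.mp (hr t htn)).2
              linarith
          have ha2 : dlb * Sp ≤ ∑ i, p t i * d i := by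
            rw [hSpdef, Finset.mul_sum]
            apply Finset.sum_le_sum
            intro i _
            rw [mul_comm]
            exact mul_le_mul_of_nonneg_left (hd i).1 (hpnn t i)
          have heq2 : P = (∑ i, p t i * (a t i * x t)) - ∑ i, p t i * d i := by
            rw [hPdef, ← Finset.sum_sub_distrib]
            apply Finset.sum_congr rfl; intro i _; rw [hvdef]; ring
          linarith
        -- S ≤ Sp
        have hSp0 : 0 ≤ Sp := Finset.sum_nonneg fun i _ => hpnn t i
        have hSSp : S ≤ Sp := by
          have hsum : Φ t ≤ Sp^2 := by
            have h1 : ∀ i ∈ Finset.univ, (p t i)^2 ≤ p t i * Sp := by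
              intro i _
              have := Finset.single_le_sum (f := p t) (fun j _ => hpnn t j) (Finset.mem_univ i)
              nlinarith [hpnn t i]
            calc Φ t ≤ ∑ i, p t i * Sp := Finset.sum_le_sum h1
              _ = Sp^2 := by rw [← Finset.sum_mul]; ring
          nlinarith
        -- Cauchy-Schwarz: P ≤ S * B
        have hPS : P ≤ S * B := by
          have hcs := Finset.sum_mul_sq_le_sq_mul_sq Finset.univ (p t) v
          have hP2 : P^2 ≤ Φ t * V := by
            rw [hPdef, hΦdef, hVdef]; exact hcs
          have hSB : (S*B)^2 = Φ t * ((m:ℝ)*c^2) := by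
            rw [mul_pow, hS2, hB2]
          nlinarith [mul_le_mul_of_nonneg_left hVb (hΦnn t), mul_nonneg hS0 hB0]
        -- case split
        by_cases hcase : S ≤ M - g * B
        · nlinarith [sq_nonneg (S + g*B - M), mul_nonneg hg0.le hB0]
        · push_neg at hcase
          have hdM : dlb * M = 2*rbar + (m:ℝ)*c^2 + dlb * ((m:ℝ)*c) := by
            rw [hMdef]; field_simp
          have hgB : g * B ≤ (m:ℝ) * c := le_trans (by nlinarith) hmc.2
          have hdSp : 2*rbar + (m:ℝ)*c^2 ≤ dlb * Sp := by
            have h1 : M - (m:ℝ)*c ≤ S := by linarith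
            have h2 : dlb * (M - (m:ℝ)*c) ≤ dlb * Sp :=
              mul_le_mul_of_nonneg_left (le_trans h1 hSSp) hdlb.le
            nlinarith
          have hgV : g^2 * V ≤ g * ((m:ℝ)*c^2) := by
            have h1 : g^2 * V ≤ g^2 * ((m:ℝ)*c^2) :=
              mul_le_mul_of_nonneg_left hVb (by positivity)
            have h2 : g^2 * ((m:ℝ)*c^2) ≤ g * ((m:ℝ)*c^2) := by
              apply mul_le_mul_of_nonneg_right _ (by positivity)
              nlinarith
            linarith
          nlinarith [mul_le_mul_of_nonneg_left hPr (by linarith : (0:ℝ) ≤ 2*g),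
            mul_le_mul_of_nonneg_left hdSp hg0.le]
  have hΦn : Φ n ≤ M^2 := hind n le_rfl
  -- final bound
  have hterm : ∀ i, (max ((∑ t ∈ Finset.range n, a t i * x t) - (n:ℝ) * d i) 0)^2
      ≤ (n:ℝ) * (p n i)^2 := by
    intro i
    have h1 := part1 i
    have h2 : 0 ≤ Real.sqrt n * p n i := mul_nonneg hsn.le (hpnn n i)
    have h3 : max ((∑ t ∈ Finset.range n, a t i * x t) - (n:ℝ) * d i) 0 ≤ Real.sqrt n * p n i :=
      max_le (by linarith) h2
    have h4 : 0 ≤ max ((∑ t ∈ Finset.range n, a t i * x t) - (n:ℝ) * d i) 0 := le_max_right _ _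
    nlinarith [Real.sq_sqrt (by linarith : (0:ℝ) ≤ (n:ℝ))]
  have hsum : (∑ i, (max ((∑ t ∈ Finset.range n, a t i * x t) - (n:ℝ) * d i) 0)^2)
      ≤ (n:ℝ) * M^2 := by
    calc (∑ i, (max ((∑ t ∈ Finset.range n, a t i * x t) - (n:ℝ) * d i) 0)^2)
        ≤ ∑ i, (n:ℝ) * (p n i)^2 := Finset.sum_le_sum fun i _ => hterm i
      _ = (n:ℝ) * Φ n := by rw [hΦdef, Finset.mul_sum]
      _ ≤ (n:ℝ) * M^2 := by nlinarith
  calc Real.sqrt (∑ i, (max ((∑ t ∈ Finset.range n, a t i * x t) - (n:ℝ) * d i) 0)^2)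
      ≤ Real.sqrt ((n:ℝ) * M^2) := Real.sqrt_le_sqrt hsum
    _ = M * Real.sqrt n := by
        rw [Real.sqrt_mul (by linarith), Real.sqrt_sq hM0]; ring
end

section
/- Consider the Simple Online Algorithm with step size γ_t = 1/√n: given data (r_j, a_j) ∈ ℝ × ℝ^m for j = 1,…,n and a vector d ∈ ℝ^m, define p_1 = 0 ∈ ℝ^m and, for t = 1,…,n, x_t = 1 if r_t > a_tᵀp_t and x_t = 0 otherwise, and p_{t+1} = (p_t + (1/√n)(a_t x_t − d)) ∨ 0, where ∨ denotes the componentwise maximum. Suppose ‖a_j‖_∞ ≤ ā for all j and 0 ≤ d_i ≤ d̄ for all i. Then Σ_{t=1}^n (d − a_t x_t)ᵀ p_t ≤ m·(ā + d̄)²·√n. -/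
/-- (Key telescoping bound in the regret analysis.) With step size
`γ_t = 1/√n`, the accumulated dual cross terms satisfy
`Σ_{t=1}^n (d − a_t x_t)ᵀ p_t ≤ m (ā + d̄)² √n`. -/
theorem stmt6 (m n : ℕ) (hn : 0 < n) (r : ℕ → ℝ) (a : ℕ → Fin m → ℝ) (d : Fin m → ℝ)
    (abar dbar : ℝ)
    (ha : ∀ j < n, ∀ i, |a j i| ≤ abar) (hd : ∀ i, 0 ≤ d i ∧ d i ≤ dbar) :
    ∑ t ∈ Finset.range n, ∑ i,
        (d i - a t i * xIter m r a d (fun _ => 1 / Real.sqrt n) t) *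
          pIter m r a d (fun _ => 1 / Real.sqrt n) t i ≤
      (m : ℝ) * (abar + dbar) ^ 2 * Real.sqrt n := by

  have hsn : (0:ℝ) < Real.sqrt n := Real.sqrt_pos.mpr (by exact_mod_cast hn)
  set γ : ℝ := 1 / Real.sqrt n with hγdef
  have hγ : 0 < γ := by rw [hγdef]; positivity
  set p := pIter m r a d (fun _ => γ) with hp
  set x := xIter m r a d (fun _ => γ) with hx
  set B := abar + dbar with hBdef
  have hstep : ∀ t i, p (t+1) i = max (p t i + γ * (a t i * x t - d i)) 0 := by
    intro t i
    simp [hp, hx, pIter, xIter]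
  have hp0 : ∀ i, p 0 i = 0 := by intro i; simp [hp, pIter]
  have key : ∀ t, t < n → ∀ i, 2*γ*((d i - a t i * x t) * p t i)
      ≤ (p t i)^2 - (p (t+1) i)^2 + γ^2 * B^2 := by
    intro t ht i
    have habar := abs_le.mp (ha t ht i)
    have hx01 : x t = 0 ∨ x t = 1 := by
      simp only [hx, xIter]
      by_cases h : (∑ k, a t k * pIter m r a d (fun _ => γ) t k) < r t <;> simp [h]
    have hd1 := (hd i).1
    have hd2 := (hd i).2
    have hg : (a t i * x t - d i)^2 ≤ B^2 := by
      rcases hx01 with h | h <;> rw [h] <;> nlinarith [habar.1, habar.2]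
    have hsq : (p (t+1) i)^2 ≤ (p t i + γ * (a t i * x t - d i))^2 := by
      rw [hstep]
      rcases le_or_gt (p t i + γ * (a t i * x t - d i)) 0 with h | h
      · rw [max_eq_right h]; simpa using sq_nonneg (p t i + γ * (a t i * x t - d i))
      · rw [max_eq_left h.le]
    nlinarith [mul_le_mul_of_nonneg_left hg (sq_nonneg γ)]
  have hsum : 2*γ * (∑ t ∈ Finset.range n, ∑ i, (d i - a t i * x t) * p t i)
      ≤ ∑ t ∈ Finset.range n, ∑ i, ((p t i)^2 - (p (t+1) i)^2 + γ^2*B^2) := by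
    rw [Finset.mul_sum]
    refine Finset.sum_le_sum fun t ht => ?_
    rw [Finset.mul_sum]
    exact Finset.sum_le_sum fun i _ => key t (Finset.mem_range.mp ht) i
  have htel : ∑ t ∈ Finset.range n, ∑ i, ((p t i)^2 - (p (t+1) i)^2 + γ^2*B^2)
      ≤ (n:ℝ) * ((m:ℝ) * (γ^2 * B^2)) := by
    have h1 : ∑ t ∈ Finset.range n, ∑ i, ((p t i)^2 - (p (t+1) i)^2 + γ^2*B^2)
        = (∑ i : Fin m, ((p 0 i)^2 - (p n i)^2)) + (n:ℝ) * ((m:ℝ) * (γ^2*B^2)) := by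
      simp only [Finset.sum_add_distrib]
      rw [Finset.sum_comm]
      congr 1
      · exact Finset.sum_congr rfl fun i _ => Finset.sum_range_sub' (fun t => (p t i)^2) n
      · simp [Finset.sum_const, mul_assoc]
    rw [h1]
    have h2 : (∑ i : Fin m, ((p 0 i)^2 - (p n i)^2)) ≤ 0 := by
      apply Finset.sum_nonpos
      intro i _
      rw [hp0]
      nlinarith [sq_nonneg (p n i)]
    linarith
  have hγ2 : (n:ℝ) * γ^2 = 1 := by
    rw [hγdef, div_pow, one_pow, Real.sq_sqrt (by positivity : (0:ℝ) ≤ (n:ℝ))]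
    field_simp
  have hγs : γ * Real.sqrt n = 1 := by
    rw [hγdef]; field_simp
  have hB2 : (0:ℝ) ≤ (m:ℝ) * B^2 := by positivity
  rw [show (m:ℝ) * (abar + dbar)^2 * Real.sqrt n = (m:ℝ) * B^2 * Real.sqrt n by rw [hBdef]]
  rw [← mul_le_mul_iff_right₀ (show (0:ℝ) < 2*γ by linarith)]
  calc 2*γ * (∑ t ∈ Finset.range n, ∑ i, (d i - a t i * x t) * p t i)
      ≤ (n:ℝ) * ((m:ℝ) * (γ^2 * B^2)) := le_trans hsum htel
    _ ≤ 2*γ*((m:ℝ) * B^2 * Real.sqrt n) := by nlinarith [hγ2, hγs, hB2]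
end

section
/- Let (r_j, a_j), j = 1,…,n, be i.i.d. random vectors in ℝ × ℝ^m defined on a probability space, satisfying |r_j| ≤ r̄ and ‖a_j‖_∞ ≤ ā almost surely, and let d ∈ ℝ^m satisfy 0 < d̲ ≤ d_i ≤ d̄ for all i. Run the Simple Online Algorithm with step size γ_t = 1/√n: p_1 = 0 ∈ ℝ^m and, for t = 1,…,n, x_t = 1 if r_t > a_tᵀp_t and x_t = 0 otherwise, and p_{t+1} = (p_t + (1/√n)(a_t x_t − d)) ∨ 0, where ∨ denotes the componentwise maximum. Let R_n* be the (random) optimal value of the LP: maximize Σ_{j=1}^n r_j x_j over x ∈ [0,1]^n subject to Σ_{j=1}^n a_{ij} x_j ≤ n d_i for i = 1,…,m, and let R_n = Σ_{t=1}^n r_t x_t be the objective value attained by the algorithm. Then E[R_n* − R_n] ≤ m·(ā + d̄)²·√n. -/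
open MeasureTheory ProbabilityTheory

/-- Optimal value of the LP `max Σ_j r_j x_j  s.t.  Σ_j a_{ij} x_j ≤ b_i, x ∈ [0,1]ⁿ`,
as the supremum of the objective over the feasible set. -/
noncomputable def LPval (n m : ℕ) (r : Fin n → ℝ) (a : Fin n → Fin m → ℝ)
    (b : Fin m → ℝ) : ℝ :=
  sSup ((fun x : Fin n → ℝ => ∑ j, r j * x j) ''
    {x | (∀ j, 0 ≤ x j ∧ x j ≤ 1) ∧ ∀ i, ∑ j, a j i * x j ≤ b i})

lemma pIter_nonneg (m : ℕ) (r : ℕ → ℝ) (a : ℕ → Fin m → ℝ) (d : Fin m → ℝ)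
    (γ : ℕ → ℝ) (t : ℕ) (i : Fin m) : 0 ≤ pIter m r a d γ t i := by
  cases t with
  | zero => simp [pIter]
  | succ t => exact le_max_right _ _

lemma xIter_mem (m : ℕ) (r : ℕ → ℝ) (a : ℕ → Fin m → ℝ) (d : Fin m → ℝ)
    (γ : ℕ → ℝ) (t : ℕ) : xIter m r a d γ t = 0 ∨ xIter m r a d γ t = 1 := by
  unfold xIter; split <;> simp

lemma pIter_congr (m : ℕ) (r r' : ℕ → ℝ) (a a' : ℕ → Fin m → ℝ) (d : Fin m → ℝ)
    (γ : ℕ → ℝ) (t : ℕ) (h : ∀ s < t, r s = r' s ∧ a s = a' s) :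
    pIter m r a d γ t = pIter m r' a' d γ t := by
  induction t with
  | zero => rfl
  | succ t ih =>
    have ih' := ih (fun s hs => h s (hs.trans (Nat.lt_succ_self t)))
    have hr := (h t (Nat.lt_succ_self t)).1
    have ha := (h t (Nat.lt_succ_self t)).2
    funext i
    simp only [pIter, ih', hr, ha]

lemma measurable_pIter {Ω' : Type*} [MeasurableSpace Ω'] (m : ℕ) (R : ℕ → Ω' → ℝ)
    (A : ℕ → Ω' → Fin m → ℝ) (d : Fin m → ℝ) (γ : ℕ → ℝ) (t : ℕ)
    (h : ∀ s < t, Measurable (R s) ∧ Measurable (A s)) :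
    Measurable fun ω => pIter m (fun j => R j ω) (fun j => A j ω) d γ t := by
  induction t with
  | zero => simpa [pIter] using measurable_const
  | succ t ih =>
    have ih' := ih (fun s hs => h s (hs.trans (Nat.lt_succ_self t)))
    have hR := (h t (Nat.lt_succ_self t)).1
    have hA := (h t (Nat.lt_succ_self t)).2
    have hAi : ∀ i, Measurable fun ω => A t ω i := fun i => (measurable_pi_apply i).comp hA
    have hsum : Measurable fun ω => ∑ k, A t ω k *
        pIter m (fun j => R j ω) (fun j => A j ω) d γ t k := by
      apply Finset.measurable_sum
      intro k _
      exact (hAi k).mul ((measurable_pi_apply k).comp ih')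
    have hset : MeasurableSet {ω | (∑ k, A t ω k *
        pIter m (fun j => R j ω) (fun j => A j ω) d γ t k) < R t ω} :=
      measurableSet_lt hsum hR
    refine measurable_pi_lambda _ (fun i => ?_)
    refine Measurable.max ?_ measurable_const
    refine Measurable.add ((measurable_pi_apply i).comp ih') ?_
    refine Measurable.const_mul ?_ _
    refine Measurable.sub ?_ measurable_const
    exact (hAi i).mul (Measurable.ite hset measurable_const measurable_const)

lemma pIter_le (m : ℕ) (r : ℕ → ℝ) (a : ℕ → Fin m → ℝ) (d : Fin m → ℝ)
    (γ : ℕ → ℝ) (abar dbar : ℝ) (hγ : ∀ s, 0 ≤ γ s)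
    (ha : ∀ s, ∀ i, |a s i| ≤ abar) (hd : ∀ i, 0 ≤ d i ∧ d i ≤ dbar)
    (t : ℕ) (i : Fin m) :
    pIter m r a d γ t i ≤ ∑ s ∈ Finset.range t, γ s * (abar + dbar) := by
  induction t with
  | zero => simp [pIter]
  | succ t ih =>
    set X := (if (∑ k, a t k * pIter m r a d γ t k) < r t then (1:ℝ) else 0) with hX
    have hx : X = 0 ∨ X = 1 := by rw [hX]; split <;> simp
    have hstep : |a t i * X - d i| ≤ abar + dbar := by
      have hai := ha t i
      have habar : (0:ℝ) ≤ abar := le_trans (abs_nonneg _) hai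
      rcases hx with hx | hx <;> rw [hx]
      · rw [mul_zero, zero_sub, abs_neg, abs_of_nonneg (hd i).1]
        linarith [(hd i).2]
      · rw [mul_one]
        calc |a t i - d i| ≤ |a t i| + |d i| := abs_sub _ _
        _ ≤ abar + dbar := by
            rw [abs_of_nonneg (hd i).1]; exact add_le_add hai (hd i).2
    have : pIter m r a d γ (t+1) i ≤ pIter m r a d γ t i + γ t * (abar + dbar) := by
      have h1 : pIter m r a d γ t i
          + γ t * (a t i * X - d i)
          ≤ pIter m r a d γ t i + γ t * (abar + dbar) := by
        gcongr
        · exact hγ t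
        · exact le_trans (le_abs_self _) hstep
      have h0 : (0:ℝ) ≤ pIter m r a d γ t i + γ t * (abar + dbar) := by
        have := pIter_nonneg m r a d γ t i
        have := mul_nonneg (hγ t) (le_trans (abs_nonneg _) hstep)
        linarith
      show max (pIter m r a d γ t i + γ t * (a t i * X - d i)) 0 ≤ _
      exact max_le h1 h0
    calc pIter m r a d γ (t+1) i ≤ pIter m r a d γ t i + γ t * (abar + dbar) := this
    _ ≤ (∑ s ∈ Finset.range t, γ s * (abar + dbar)) + γ t * (abar + dbar) := by gcongr
    _ = _ := (Finset.sum_range_succ _ t).symm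

lemma weak_duality (n m : ℕ) (r : Fin n → ℝ) (a : Fin n → Fin m → ℝ) (b : Fin m → ℝ)
    (p : Fin m → ℝ) (hp : ∀ i, 0 ≤ p i) (hb : ∀ i, 0 ≤ b i) :
    LPval n m r a b ≤ (∑ j, max (r j - ∑ i, a j i * p i) 0) + ∑ i, b i * p i := by
  have hB : (0:ℝ) ≤ (∑ j, max (r j - ∑ i, a j i * p i) 0) + ∑ i, b i * p i := by
    have h1 : (0:ℝ) ≤ ∑ j, max (r j - ∑ i, a j i * p i) 0 :=
      Finset.sum_nonneg fun j _ => le_max_right _ _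
    have h2 : (0:ℝ) ≤ ∑ i, b i * p i :=
      Finset.sum_nonneg fun i _ => mul_nonneg (hb i) (hp i)
    linarith
  refine Real.sSup_le ?_ hB
  rintro y ⟨x, ⟨hx01, hxc⟩, rfl⟩
  have swap : (∑ j, (∑ i, a j i * p i) * x j) = ∑ i, (∑ j, a j i * x j) * p i := by
    simp_rw [Finset.sum_mul]
    rw [Finset.sum_comm]
    exact Finset.sum_congr rfl fun i _ => Finset.sum_congr rfl fun j _ => by ring
  have split : ∑ j, r j * x j = (∑ j, (r j - ∑ i, a j i * p i) * x j)
      + ∑ j, (∑ i, a j i * p i) * x j := by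
    rw [← Finset.sum_add_distrib]
    exact Finset.sum_congr rfl fun j _ => by ring
  show ∑ j, r j * x j ≤ _
  rw [split, swap]
  refine add_le_add (Finset.sum_le_sum fun j _ => ?_) (Finset.sum_le_sum fun i _ => ?_)
  · rcases le_or_gt (r j - ∑ i, a j i * p i) 0 with h | h
    · calc (r j - ∑ i, a j i * p i) * x j ≤ 0 :=
          mul_nonpos_of_nonpos_of_nonneg h (hx01 j).1
      _ ≤ _ := le_max_right _ _
    · calc (r j - ∑ i, a j i * p i) * x j ≤ (r j - ∑ i, a j i * p i) * 1 :=
          mul_le_mul_of_nonneg_left (hx01 j).2 h.le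
      _ = r j - ∑ i, a j i * p i := mul_one _
      _ ≤ _ := le_max_left _ _
  · exact mul_le_mul_of_nonneg_right (hxc i) (hp i)

lemma drift_step (m : ℕ) (u w : Fin m → ℝ) (c : ℝ) (hc : 0 < c) :
    ∑ i, (-(w i)) * u i ≤
      ((∑ i, (u i)^2) - ∑ i, (max (u i + c * w i) 0)^2) / (2*c) + c/2 * ∑ i, (w i)^2 := by
  have h : (∑ i, (max (u i + c * w i) 0)^2) ≤
      (∑ i, (u i)^2) + 2*c*(∑ i, w i * u i) + c^2 * ∑ i, (w i)^2 := by
    have hterm : ∀ i : Fin m, (max (u i + c * w i) 0)^2 ≤ (u i + c * w i)^2 := by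
      intro i
      rcases le_or_gt (u i + c * w i) 0 with h | h
      · rw [max_eq_right h]; simpa using sq_nonneg (u i + c * w i)
      · rw [max_eq_left h.le]
    calc (∑ i, (max (u i + c * w i) 0)^2) ≤ ∑ i, (u i + c * w i)^2 :=
        Finset.sum_le_sum fun i _ => hterm i
    _ = (∑ i, (u i)^2) + 2*c*(∑ i, w i * u i) + c^2 * ∑ i, (w i)^2 := by
        rw [Finset.mul_sum, Finset.mul_sum, ← Finset.sum_add_distrib, ← Finset.sum_add_distrib]
        exact Finset.sum_congr rfl fun i _ => by ring
  have hsum : ∑ i, (-(w i)) * u i = -(∑ i, w i * u i) := by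
    rw [← Finset.sum_neg_distrib]
    exact Finset.sum_congr rfl fun i _ => by ring
  rw [hsum]
  have hc2 : (0:ℝ) < 2*c := by linarith
  have heq : ((∑ i, (u i)^2) - ∑ i, (max (u i + c * w i) 0)^2) / (2*c) + c/2 * ∑ i, (w i)^2
      = ((∑ i, (u i)^2) - (∑ i, (max (u i + c * w i) 0)^2) + c^2 * ∑ i, (w i)^2) / (2*c) := by
    field_simp
  rw [heq, le_div_iff₀ hc2]
  nlinarith [h]

lemma drift_bound (m n : ℕ) (r : ℕ → ℝ) (a : ℕ → Fin m → ℝ) (d : Fin m → ℝ)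
    (c : ℝ) (hc : 0 < c) (K : ℝ)
    (hv : ∀ t, t < n → ∀ i : Fin m,
      (a t i * xIter m r a d (fun _ => c) t - d i)^2 ≤ K) :
    ∑ t ∈ Finset.range n, ∑ i, (d i - a t i * xIter m r a d (fun _ => c) t)
        * pIter m r a d (fun _ => c) t i
      ≤ c/2 * (n * (m * K)) := by
  set γ : ℕ → ℝ := fun _ => c with hγ
  set p := pIter m r a d γ with hp
  set X := xIter m r a d γ with hX
  set S : ℕ → ℝ := fun t => ∑ i, (p t i)^2 with hS
  have hstep : ∀ t, ∀ i, p (t+1) i = max (p t i + c * (a t i * X t - d i)) 0 := by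
    intro t i; rfl
  have key : ∀ t, ∑ i, (d i - a t i * X t) * p t i ≤
      (S t - S (t+1)) / (2*c) + c/2 * ∑ i, (a t i * X t - d i)^2 := by
    intro t
    have := drift_step m (p t) (fun i => a t i * X t - d i) c hc
    have heq1 : ∑ i, (d i - a t i * X t) * p t i
        = ∑ i, (-(a t i * X t - d i)) * p t i :=
      Finset.sum_congr rfl fun i _ => by ring
    have heq2 : S (t+1) = ∑ i, (max (p t i + c * (a t i * X t - d i)) 0)^2 := by
      rw [hS]
      exact Finset.sum_congr rfl fun i _ => by rw [hstep t i]
    rw [heq1, heq2]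
    exact this
  calc ∑ t ∈ Finset.range n, ∑ i, (d i - a t i * X t) * p t i
      ≤ ∑ t ∈ Finset.range n, ((S t - S (t+1)) / (2*c) + c/2 * ∑ i, (a t i * X t - d i)^2) :=
        Finset.sum_le_sum fun t _ => key t
    _ = (∑ t ∈ Finset.range n, (S t - S (t+1))) / (2*c)
        + c/2 * ∑ t ∈ Finset.range n, ∑ i, (a t i * X t - d i)^2 := by
        rw [Finset.sum_add_distrib, Finset.sum_div, Finset.mul_sum]
    _ ≤ 0 + c/2 * (n * (m * K)) := by
        refine add_le_add ?_ ?_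
        · have htel : ∑ t ∈ Finset.range n, (S t - S (t+1)) = S 0 - S n :=
            Finset.sum_range_sub' S n
          have hS0 : S 0 = 0 := by simp [hS, hp, pIter]
          have hSn : 0 ≤ S n := Finset.sum_nonneg fun i _ => sq_nonneg _
          rw [htel, hS0]
          apply div_nonpos_of_nonpos_of_nonneg <;> linarith
        · refine mul_le_mul_of_nonneg_left ?_ (by linarith)
          calc ∑ t ∈ Finset.range n, ∑ i, (a t i * X t - d i)^2
              ≤ ∑ t ∈ Finset.range n, ∑ i : Fin m, K := by
                refine Finset.sum_le_sum fun t ht => Finset.sum_le_sum fun i _ =>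
                  hv t (Finset.mem_range.mp ht) i
            _ = n * (m * K) := by simp [Finset.sum_const, mul_assoc]
    _ = c/2 * (n * (m * K)) := by ring

lemma indep_exp {Ω : Type*} [MeasurableSpace Ω] (μ : Measure Ω) [IsProbabilityMeasure μ]
    {α β : Type*} [MeasurableSpace α] [MeasurableSpace β]
    [TopologicalSpace α] [TopologicalSpace β] [BorelSpace α] [BorelSpace β]
    [SecondCountableTopology α] [SecondCountableTopology β]
    (X : Ω → α) (Y : Ω → β) (hX : Measurable X) (hY : Measurable Y)
    (hInd : IndepFun X Y μ)
    (h : α → β → ℝ) (hh : Continuous (fun q : α × β => h q.1 q.2))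
    (SX : Set α) (SY : Set β) (hSX : MeasurableSet SX) (hSY : MeasurableSet SY)
    (hXS : ∀ᵐ ω ∂μ, X ω ∈ SX) (hYS : ∀ᵐ ω ∂μ, Y ω ∈ SY)
    (C : ℝ) (hC : ∀ x ∈ SX, ∀ y ∈ SY, |h x y| ≤ C) :
    ∫ ω, h (X ω) (Y ω) ∂μ = ∫ ω, (∫ ω', h (X ω') (Y ω) ∂μ) ∂μ := by
  set νX := μ.map X with hνX
  set νY := μ.map Y with hνY
  have : IsProbabilityMeasure νX := Measure.isProbabilityMeasure_map hX.aemeasurable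
  have : IsProbabilityMeasure νY := Measure.isProbabilityMeasure_map hY.aemeasurable
  have hmap : μ.map (fun ω => (X ω, Y ω)) = νX.prod νY :=
    (indepFun_iff_map_prod_eq_prod_map_map hX.aemeasurable hY.aemeasurable).mp hInd
  have hXae : ∀ᵐ x ∂νX, x ∈ SX := (ae_map_iff hX.aemeasurable hSX).mpr hXS
  have hYae : ∀ᵐ y ∂νY, y ∈ SY := (ae_map_iff hY.aemeasurable hSY).mpr hYS
  have hprod_ae : ∀ᵐ q ∂(νX.prod νY), q.1 ∈ SX ∧ q.2 ∈ SY := by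
    rw [MeasureTheory.Measure.ae_prod_iff_ae_ae]
    · filter_upwards [hXae] with x hx
      filter_upwards [hYae] with y hy
      exact ⟨hx, hy⟩
    · exact ((hSX.preimage measurable_fst).inter (hSY.preimage measurable_snd))
  have hFm : StronglyMeasurable (fun q : α × β => h q.1 q.2) := hh.stronglyMeasurable
  have hint : Integrable (fun q : α × β => h q.1 q.2) (νX.prod νY) := by
    refine Integrable.mono' (integrable_const C) hFm.aestronglyMeasurable ?_
    filter_upwards [hprod_ae] with q hq
    simpa using hC q.1 hq.1 q.2 hq.2
  have hG : StronglyMeasurable (fun y => ∫ x, h x y ∂νX) :=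
    hFm.integral_prod_left'
  calc ∫ ω, h (X ω) (Y ω) ∂μ
      = ∫ q, h q.1 q.2 ∂(μ.map (fun ω => (X ω, Y ω))) :=
        (integral_map (hX.prodMk hY).aemeasurable hFm.aestronglyMeasurable).symm
    _ = ∫ q, h q.1 q.2 ∂(νX.prod νY) := by rw [hmap]
    _ = ∫ y, ∫ x, h x y ∂νX ∂νY := integral_prod_symm _ hint
    _ = ∫ ω, (∫ x, h x (Y ω) ∂νX) ∂μ :=
        integral_map hY.aemeasurable hG.aestronglyMeasurable
    _ = ∫ ω, (∫ ω', h (X ω') (Y ω) ∂μ) ∂μ := by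
        refine integral_congr_ae (Filter.Eventually.of_forall fun ω => ?_)
        exact integral_map hX.aemeasurable (hh.comp (Continuous.prodMk_left (Y ω))).aestronglyMeasurable

lemma indep_pIter {Ω : Type*} [MeasurableSpace Ω] (μ : Measure Ω) (m n : ℕ)
    (r : ℕ → Ω → ℝ) (a : ℕ → Ω → Fin m → ℝ) (d : Fin m → ℝ) (γ : ℕ → ℝ)
    (hmeas : ∀ j < n, Measurable fun ω => (r j ω, a j ω))
    (hindep : iIndepFun
      (fun (j : Fin n) ω => (r j.val ω, a j.val ω)) μ)
    (t : ℕ) (ht : t < n) :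
    IndepFun (fun ω => (r t ω, a t ω))
      (fun ω => pIter m (fun j => r j ω) (fun j => a j ω) d γ t) μ := by
  classical
  set E := ℝ × (Fin m → ℝ)
  set f : Fin n → Ω → E := fun j ω => (r j.val ω, a j.val ω) with hf
  set S : Finset (Fin n) := {⟨t, ht⟩} with hSdef
  set T : Finset (Fin n) := Finset.univ.filter (fun j : Fin n => j.val < t) with hTdef
  have hST : Disjoint S T := by
    rw [Finset.disjoint_left]
    intro j hjS hjT
    rw [hSdef, Finset.mem_singleton] at hjS
    rw [hTdef, Finset.mem_filter] at hjT
    rw [hjS] at hjT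
    exact absurd hjT.2 (lt_irrefl t)
  have hf_meas : ∀ j : Fin n, Measurable (f j) := fun j => hmeas j.val j.isLt
  have hIF := hindep.indepFun_finset S T hST hf_meas
  -- projections
  have htS : (⟨t, ht⟩ : Fin n) ∈ S := Finset.mem_singleton_self _
  set φ : (S → E) → E := fun v => v ⟨⟨t, ht⟩, htS⟩ with hφ
  have hφm : Measurable φ := measurable_pi_apply _
  set R : (T → E) → ℕ → ℝ := fun v s =>
    if h : s < t then (v ⟨⟨s, h.trans ht⟩, by
      rw [hTdef, Finset.mem_filter]; exact ⟨Finset.mem_univ _, h⟩⟩).1 else 0 with hR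
  set A : (T → E) → ℕ → Fin m → ℝ := fun v s =>
    if h : s < t then (v ⟨⟨s, h.trans ht⟩, by
      rw [hTdef, Finset.mem_filter]; exact ⟨Finset.mem_univ _, h⟩⟩).2 else 0 with hA
  set ψ : (T → E) → Fin m → ℝ := fun v =>
    pIter m (fun j => R v j) (fun j => A v j) d γ t with hψ
  have hψm : Measurable ψ := by
    apply measurable_pIter
    intro s hs
    constructor
    · simp only [hR, dif_pos hs]
      exact measurable_fst.comp (measurable_pi_apply _)
    · simp only [hA, dif_pos hs]
      exact measurable_snd.comp (measurable_pi_apply _)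
  have := hIF.comp hφm hψm
  have h1 : (φ ∘ fun ω (i : S) => f i ω) = fun ω => (r t ω, a t ω) := rfl
  have h2 : (ψ ∘ fun ω (i : T) => f i ω)
      = fun ω => pIter m (fun j => r j ω) (fun j => a j ω) d γ t := by
    funext ω
    show pIter m _ _ d γ t = _
    apply pIter_congr
    intro s hs
    constructor
    · show R (fun i : T => f i ω) s = r s ω
      simp only [hR, dif_pos hs]
      rfl
    · show A (fun i : T => f i ω) s = a s ω
      simp only [hA, dif_pos hs]
      rfl
  rw [h1, h2] at this
  exact this



/-- (Theorem 1, regret bound, stochastic input model.) For i.i.d. data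
`(r_j, a_j)` bounded by `r̄, ā` a.s., `0 < d̲ ≤ d_i ≤ d̄`, and step size `γ_t = 1/√n`,
the expected optimality gap of the Simple Online Algorithm satisfies
`E[R_n* − R_n] ≤ m (ā + d̄)² √n`. -/
theorem stmt7 {Ω : Type*} [MeasurableSpace Ω] (μ : Measure Ω) [IsProbabilityMeasure μ]
    (m n : ℕ) (hn : 0 < n)
    (r : ℕ → Ω → ℝ) (a : ℕ → Ω → Fin m → ℝ)
    (hmeas : ∀ j < n, Measurable fun ω => (r j ω, a j ω))
    (hindep : iIndepFun
      (fun (j : Fin n) ω => (r j.val ω, a j.val ω)) μ)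
    (hident : ∀ j < n, Measure.map (fun ω => (r j ω, a j ω)) μ =
      Measure.map (fun ω => (r 0 ω, a 0 ω)) μ)
    (rbar abar dlb dbar : ℝ) (hdlb : 0 < dlb) (d : Fin m → ℝ)
    (hbdd : ∀ j < n, ∀ᵐ ω ∂μ, |r j ω| ≤ rbar ∧ ∀ i, |a j ω i| ≤ abar)
    (hd : ∀ i, dlb ≤ d i ∧ d i ≤ dbar) :
    ∫ ω, (LPval n m (fun j => r j.val ω) (fun j i => a j.val ω i) (fun i => (n : ℝ) * d i)
        - ∑ t ∈ Finset.range n,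
            r t ω * xIter m (fun j => r j ω) (fun j => a j ω) d (fun _ => 1 / Real.sqrt n) t) ∂μ
      ≤ (m : ℝ) * (abar + dbar) ^ 2 * Real.sqrt n := by
  classical
  -- basic constants
  have hK : (0:ℝ) ≤ (m : ℝ) * (abar + dbar) ^ 2 * Real.sqrt n := by positivity
  -- trivial case: the integrand is not integrable
  by_cases hInt : Integrable (fun ω =>
      LPval n m (fun j => r j.val ω) (fun j i => a j.val ω i) (fun i => (n : ℝ) * d i)
        - ∑ t ∈ Finset.range n,
            r t ω * xIter m (fun j => r j ω) (fun j => a j ω) d (fun _ => 1 / Real.sqrt n) t) μ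
  swap
  · rw [integral_undef hInt]; exact hK
  -- notation
  set c : ℝ := 1 / Real.sqrt n with hc
  have hsq : (0:ℝ) < Real.sqrt n := Real.sqrt_pos.mpr (by exact_mod_cast hn)
  have hcpos : 0 < c := by rw [hc]; positivity
  set γ : ℕ → ℝ := fun _ => c with hγ
  set P : ℕ → Ω → Fin m → ℝ :=
    fun t ω => pIter m (fun j => r j ω) (fun j => a j ω) d γ t with hP
  set XV : ℕ → Ω → ℝ :=
    fun t ω => xIter m (fun j => r j ω) (fun j => a j ω) d γ t with hXV
  set LP : Ω → ℝ := fun ω =>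
    LPval n m (fun j => r j.val ω) (fun j i => a j.val ω i) (fun i => (n : ℝ) * d i) with hLP
  -- the payoff function
  set h : (ℝ × (Fin m → ℝ)) → (Fin m → ℝ) → ℝ :=
    fun x y => max (x.1 - ∑ i, x.2 i * y i) 0 with hh
  have hhc : Continuous (fun q : (ℝ × (Fin m → ℝ)) × (Fin m → ℝ) => h q.1 q.2) := by
    rw [hh]
    refine Continuous.max ?_ continuous_const
    refine Continuous.sub (continuous_fst.comp continuous_fst) ?_
    refine continuous_finset_sum _ fun i _ => Continuous.mul ?_ ?_
    · exact (continuous_apply i).comp (continuous_snd.comp continuous_fst)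
    · exact (continuous_apply i).comp continuous_snd
  set g : (Fin m → ℝ) → ℝ := fun y => ∫ ω, h (r 0 ω, a 0 ω) y ∂μ with hg
  set f : (Fin m → ℝ) → ℝ := fun y => g y + ∑ i, d i * y i with hf
  set c0 : ℝ := sInf (f '' {y | ∀ i, 0 ≤ y i}) with hc0
  -- processes
  set M : ℕ → Ω → ℝ := fun t ω => h (r t ω, a t ω) (P t ω) with hM
  set D : ℕ → Ω → ℝ := fun t ω => ∑ i, (d i - a t ω i * XV t ω) * P t ω i with hD
  set RX : ℕ → Ω → ℝ := fun t ω => r t ω * XV t ω with hRX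
  -- scalar facts
  have hne : (ae μ).NeBot := ae_neBot.mpr (IsProbabilityMeasure.ne_zero μ)
  obtain ⟨ω₀, hω₀⟩ := (hbdd 0 hn).exists
  have hrbar : 0 ≤ rbar := le_trans (abs_nonneg _) hω₀.1
  have habar : 0 < m → 0 ≤ abar := fun hm =>
    le_trans (abs_nonneg _) (hω₀.2 ⟨0, hm⟩)
  set B : ℝ := n * (c * (|abar| + |dbar|)) with hB
  have hBnn : 0 ≤ B := by
    rw [hB, hc]; positivity
  have hAE : ∀ᵐ ω ∂μ, ∀ j < n, |r j ω| ≤ rbar ∧ ∀ i, |a j ω i| ≤ abar := by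
    have h' : ∀ j ∈ Set.Iio n, ∀ᵐ ω ∂μ, |r j ω| ≤ rbar ∧ ∀ i, |a j ω i| ≤ abar :=
      fun j hj => hbdd j hj
    have := (ae_ball_iff (Set.to_countable (Set.Iio n))).mpr h'
    filter_upwards [this] with ω hω
    exact fun j hj => hω j hj
  -- measurability
  have hmr : ∀ j < n, Measurable (r j) := fun j hj => measurable_fst.comp (hmeas j hj)
  have hma : ∀ j < n, Measurable (a j) := fun j hj => measurable_snd.comp (hmeas j hj)
  have hmP : ∀ t ≤ n, Measurable (P t) := by
    intro t ht
    rw [hP]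
    exact measurable_pIter m r a d γ t
      (fun s hs => ⟨hmr s (lt_of_lt_of_le hs ht), hma s (lt_of_lt_of_le hs ht)⟩)
  have hmX : ∀ t < n, Measurable (XV t) := by
    intro t ht
    have hsum : Measurable fun ω => ∑ k, a t ω k * P t ω k :=
      Finset.measurable_sum _ fun k _ =>
        ((measurable_pi_apply k).comp (hma t ht)).mul
          ((measurable_pi_apply k).comp (hmP t ht.le))
    have hset : MeasurableSet {ω | (∑ k, a t ω k * P t ω k) < r t ω} :=
      measurableSet_lt hsum (hmr t ht)
    exact Measurable.ite hset measurable_const measurable_const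
  -- pathwise facts
  have hPnn : ∀ t ω i, 0 ≤ P t ω i := fun t ω i =>
    pIter_nonneg m (fun j => r j ω) (fun j => a j ω) d γ t i
  have hX01 : ∀ t ω, XV t ω = 0 ∨ XV t ω = 1 := fun t ω =>
    xIter_mem m (fun j => r j ω) (fun j => a j ω) d γ t
  have hPb : ∀ᵐ ω ∂μ, ∀ t ≤ n, ∀ i, P t ω i ≤ B := by
    filter_upwards [hAE] with ω hω
    intro t ht i
    set a' : ℕ → Fin m → ℝ := fun s => if s < n then a s ω else 0 with ha'
    have hcongr : pIter m (fun j => r j ω) (fun j => a j ω) d γ t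
        = pIter m (fun j => r j ω) a' d γ t := by
      apply pIter_congr
      intro s hs
      refine ⟨rfl, ?_⟩
      show a s ω = if s < n then a s ω else 0
      rw [if_pos (lt_of_lt_of_le hs ht)]
    have hkey := pIter_le m (fun j => r j ω) a' d γ |abar| |dbar|
      (fun s => hcpos.le)
      (fun s i' => by
        show |(if s < n then a s ω else 0) i'| ≤ |abar|
        by_cases hs : s < n
        · rw [if_pos hs]; exact le_trans ((hω s hs).2 i') (le_abs_self _)
        · rw [if_neg hs]; simpa using abs_nonneg abar)
      (fun i' => ⟨hdlb.le.trans (hd i').1, (hd i').2.trans (le_abs_self _)⟩) t i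
    show pIter m (fun j => r j ω) (fun j => a j ω) d γ t i ≤ B
    rw [hcongr]
    have hsum : ∑ s ∈ Finset.range t, γ s * (|abar| + |dbar|)
        = t * (c * (|abar| + |dbar|)) := by
      simp only [hγ, Finset.sum_const, Finset.card_range, nsmul_eq_mul]
    rw [hsum] at hkey
    refine le_trans hkey ?_
    rw [hB]
    have hcK : 0 ≤ c * (|abar| + |dbar|) := by positivity
    exact mul_le_mul_of_nonneg_right (by exact_mod_cast ht) hcK
  -- bounding sets
  set SX : Set (ℝ × (Fin m → ℝ)) := {x | |x.1| ≤ rbar ∧ ∀ i, |x.2 i| ≤ abar} with hSX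
  set SY : Set (Fin m → ℝ) := {y | ∀ i, 0 ≤ y i ∧ y i ≤ B} with hSY
  have hSXm : MeasurableSet SX := by
    rw [hSX]
    have he : {x : ℝ × (Fin m → ℝ) | |x.1| ≤ rbar ∧ ∀ i, |x.2 i| ≤ abar}
        = {x : ℝ × (Fin m → ℝ) | |x.1| ≤ rbar} ∩ ⋂ i, {x : ℝ × (Fin m → ℝ) | |x.2 i| ≤ abar} := by
      ext x; simp [Set.mem_iInter]
    rw [he]
    refine MeasurableSet.inter ?_ (MeasurableSet.iInter fun i => ?_)
    · exact measurableSet_le measurable_fst.abs measurable_const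
    · have hm2 : Measurable fun x : ℝ × (Fin m → ℝ) => x.2 i :=
        (measurable_pi_apply i).comp measurable_snd
      exact measurableSet_le hm2.abs measurable_const
  have hSYm : MeasurableSet SY := by
    rw [hSY]
    have he : {y : Fin m → ℝ | ∀ i, 0 ≤ y i ∧ y i ≤ B}
        = ⋂ i, ({y : Fin m → ℝ | 0 ≤ y i} ∩ {y : Fin m → ℝ | y i ≤ B}) := by
      ext y; simp [Set.mem_iInter, forall_and]
    rw [he]
    refine MeasurableSet.iInter fun i => MeasurableSet.inter ?_ ?_
    · exact measurableSet_le measurable_const (measurable_pi_apply i)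
    · exact measurableSet_le (measurable_pi_apply i) measurable_const
  set Ch : ℝ := rbar + m * (|abar| * B) with hCh
  have habs_max : ∀ u : ℝ, |max u 0| ≤ |u| := by
    intro u
    rw [abs_of_nonneg (le_max_right u 0)]
    exact max_le (le_abs_self u) (abs_nonneg u)
  have hCb : ∀ x ∈ SX, ∀ y ∈ SY, |h x y| ≤ Ch := by
    intro x hx y hy
    rw [hSX] at hx; rw [hSY] at hy
    refine le_trans (habs_max _) ?_
    calc |x.1 - ∑ i, x.2 i * y i| ≤ |x.1| + |∑ i, x.2 i * y i| := abs_sub _ _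
      _ ≤ rbar + ∑ i, |x.2 i * y i| :=
          add_le_add hx.1 (Finset.abs_sum_le_sum_abs _ _)
      _ ≤ rbar + ∑ _i : Fin m, |abar| * B := by
          refine add_le_add le_rfl (Finset.sum_le_sum fun i _ => ?_)
          rw [abs_mul]
          exact mul_le_mul (le_trans (hx.2 i) (le_abs_self _))
            (by rw [abs_of_nonneg (hy i).1]; exact (hy i).2) (abs_nonneg _)
            (abs_nonneg _)
      _ = Ch := by rw [Finset.sum_const, Finset.card_univ, Fintype.card_fin, nsmul_eq_mul, hCh]
  -- properties of g and f
  have hgsm : StronglyMeasurable g := by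
    have hF : StronglyMeasurable (fun q : Ω × (Fin m → ℝ) => h (r 0 q.1, a 0 q.1) q.2) :=
      hhc.stronglyMeasurable.comp_measurable
        (((hmeas 0 hn).comp measurable_fst).prodMk measurable_snd)
    exact hF.integral_prod_left'
  have hgnn : ∀ y, 0 ≤ g y := fun y =>
    integral_nonneg fun ω => le_max_right _ _
  have hXSae : ∀ j < n, ∀ᵐ ω ∂μ, (r j ω, a j ω) ∈ SX := by
    intro j hj
    filter_upwards [hAE] with ω hω
    rw [hSX]
    exact ⟨(hω j hj).1, (hω j hj).2⟩
  have hgb : ∀ y ∈ SY, |g y| ≤ Ch := by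
    intro y hy
    have hbnd : ∀ᵐ ω ∂μ, ‖h (r 0 ω, a 0 ω) y‖ ≤ Ch := by
      filter_upwards [hXSae 0 hn] with ω hω
      rw [Real.norm_eq_abs]
      exact hCb _ hω y hy
    have := norm_integral_le_of_norm_le_const hbnd (μ := μ)
    rw [probReal_univ] at this
    simpa [Real.norm_eq_abs] using this
  have hbb : BddBelow (f '' {y | ∀ i, 0 ≤ y i}) := by
    refine ⟨0, ?_⟩
    rintro q ⟨y, hy, rfl⟩
    exact add_nonneg (hgnn y) (Finset.sum_nonneg fun i _ =>
      mul_nonneg (hdlb.le.trans (hd i).1) (hy i))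
  have hc0le : ∀ y, (∀ i, 0 ≤ y i) → c0 ≤ f y := fun y hy =>
    csInf_le hbb ⟨y, hy, rfl⟩
  -- integrability
  have hYSae : ∀ t ≤ n, ∀ᵐ ω ∂μ, P t ω ∈ SY := by
    intro t ht
    filter_upwards [hPb] with ω hω
    rw [hSY]
    exact fun i => ⟨hPnn t ω i, hω t ht i⟩
  have hgi : ∀ t ≤ n, Integrable (fun ω => g (P t ω)) μ := by
    intro t ht
    refine Integrable.mono' (integrable_const Ch)
      ((hgsm.comp_measurable (hmP t ht)).aestronglyMeasurable) ?_
    filter_upwards [hYSae t ht] with ω hω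
    rw [Real.norm_eq_abs]
    exact hgb _ hω
  have hdPi : ∀ t ≤ n, Integrable (fun ω => ∑ i, d i * P t ω i) μ := by
    intro t ht
    refine Integrable.mono' (integrable_const ((m : ℝ) * (|dbar| * B)))
      (Finset.measurable_sum _ (fun i _ =>
        ((measurable_pi_apply i).comp (hmP t ht)).const_mul (d i))).aestronglyMeasurable ?_
    filter_upwards [hYSae t ht] with ω hω
    rw [Real.norm_eq_abs]
    rw [hSY] at hω
    calc |∑ i, d i * P t ω i| ≤ ∑ i, |d i * P t ω i| := Finset.abs_sum_le_sum_abs _ _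
      _ ≤ ∑ _i : Fin m, |dbar| * B := by
          refine Finset.sum_le_sum fun i _ => ?_
          rw [abs_mul]
          refine mul_le_mul ?_ ?_ (abs_nonneg _) (abs_nonneg _)
          · rw [abs_of_nonneg (hdlb.le.trans (hd i).1)]
            exact (hd i).2.trans (le_abs_self _)
          · rw [abs_of_nonneg (hPnn t ω i)]
            exact (hω i).2
      _ = (m : ℝ) * (|dbar| * B) := by
          rw [Finset.sum_const, Finset.card_univ, Fintype.card_fin, nsmul_eq_mul]
  have hfi : ∀ t ≤ n, Integrable (fun ω => f (P t ω)) μ :=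
    fun t ht => (hgi t ht).add (hdPi t ht)
  have hMi : ∀ t < n, Integrable (M t) μ := by
    intro t ht
    refine Integrable.mono' (integrable_const Ch)
      (hhc.stronglyMeasurable.comp_measurable
        ((hmeas t ht).prodMk (hmP t ht.le))).aestronglyMeasurable ?_
    filter_upwards [hXSae t ht, hYSae t ht.le] with ω h1 h2
    rw [Real.norm_eq_abs]
    exact hCb _ h1 _ h2
  have hX1 : ∀ t ω, |XV t ω| ≤ 1 := by
    intro t ω
    rcases hX01 t ω with hx | hx <;> rw [hx] <;> norm_num
  have hDi : ∀ t < n, Integrable (D t) μ := by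
    intro t ht
    refine Integrable.mono' (integrable_const ((m : ℝ) * ((|dbar| + |abar|) * B)))
      (Finset.measurable_sum _ (fun i _ =>
        ((measurable_const.sub (((measurable_pi_apply i).comp (hma t ht)).mul
          (hmX t ht))).mul ((measurable_pi_apply i).comp (hmP t ht.le))))).aestronglyMeasurable ?_
    filter_upwards [hAE, hPb] with ω h1 h2
    rw [Real.norm_eq_abs]
    calc |∑ i, (d i - a t ω i * XV t ω) * P t ω i|
        ≤ ∑ i, |(d i - a t ω i * XV t ω) * P t ω i| := Finset.abs_sum_le_sum_abs _ _
      _ ≤ ∑ _i : Fin m, (|dbar| + |abar|) * B := by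
          refine Finset.sum_le_sum fun i _ => ?_
          rw [abs_mul]
          refine mul_le_mul ?_ ?_ (abs_nonneg _) (by positivity)
          · calc |d i - a t ω i * XV t ω| ≤ |d i| + |a t ω i * XV t ω| := abs_sub _ _
              _ ≤ |dbar| + |abar| := by
                  refine add_le_add ?_ ?_
                  · rw [abs_of_nonneg (hdlb.le.trans (hd i).1)]
                    exact (hd i).2.trans (le_abs_self _)
                  · rw [abs_mul]
                    calc |a t ω i| * |XV t ω| ≤ |a t ω i| * 1 :=
                        mul_le_mul_of_nonneg_left (hX1 t ω) (abs_nonneg _)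
                      _ = |a t ω i| := mul_one _
                      _ ≤ |abar| := le_trans ((h1 t ht).2 i) (le_abs_self _)
          · rw [abs_of_nonneg (hPnn t ω i)]
            exact h2 t ht.le i
      _ = (m : ℝ) * ((|dbar| + |abar|) * B) := by
          rw [Finset.sum_const, Finset.card_univ, Fintype.card_fin, nsmul_eq_mul]
  have hRXi : ∀ t < n, Integrable (RX t) μ := by
    intro t ht
    refine Integrable.mono' (integrable_const rbar)
      ((hmr t ht).mul (hmX t ht)).aestronglyMeasurable ?_
    filter_upwards [hAE] with ω hω
    rw [Real.norm_eq_abs]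
    calc |r t ω * XV t ω| = |r t ω| * |XV t ω| := abs_mul _ _
      _ ≤ rbar * 1 := mul_le_mul ((hω t ht).1) (hX1 t ω) (abs_nonneg _) hrbar
      _ = rbar := mul_one _
  -- the independence step
  have hgj : ∀ j < n, ∀ y, ∫ ω, h (r j ω, a j ω) y ∂μ = g y := by
    intro j hj y
    have hcy : Continuous fun x : ℝ × (Fin m → ℝ) => h x y :=
      hhc.comp (continuous_id.prodMk continuous_const)
    rw [← integral_map (hmeas j hj).aemeasurable hcy.aestronglyMeasurable,
      hident j hj,
      integral_map (hmeas 0 hn).aemeasurable hcy.aestronglyMeasurable]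
  have hMg : ∀ t < n, ∫ ω, M t ω ∂μ = ∫ ω, g (P t ω) ∂μ := by
    intro t ht
    have hInd := indep_pIter μ m n r a d γ hmeas hindep t ht
    have key := indep_exp μ (fun ω => (r t ω, a t ω)) (P t) (hmeas t ht) (hmP t ht.le)
      hInd h hhc SX SY hSXm hSYm (hXSae t ht) (hYSae t ht.le) Ch hCb
    rw [hM]
    rw [key]
    exact integral_congr_ae (Filter.Eventually.of_forall fun ω => hgj t ht (P t ω))
  -- the greedy identity
  have hsumD : ∀ t ω, D t ω
      = (∑ i, d i * P t ω i) - (∑ i, a t ω i * P t ω i) * XV t ω := by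
    intro t ω
    show ∑ i, (d i - a t ω i * XV t ω) * P t ω i = _
    rw [Finset.sum_mul, ← Finset.sum_sub_distrib]
    exact Finset.sum_congr rfl fun i _ => by ring
  have hgreedy : ∀ t ω, RX t ω = M t ω + ((∑ i, d i * P t ω i) - D t ω) := by
    intro t ω
    have hMval : M t ω = max (r t ω - ∑ i, a t ω i * P t ω i) 0 := rfl
    have hgoal : r t ω * XV t ω
        = max (r t ω - ∑ i, a t ω i * P t ω i) 0 + (∑ i, a t ω i * P t ω i) * XV t ω := by
      rcases lt_or_ge (∑ i, a t ω i * P t ω i) (r t ω) with hlt | hge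
      · have hx : XV t ω = 1 := by
          show (if (∑ k, a t ω k * P t ω k) < r t ω then (1:ℝ) else 0) = 1
          rw [if_pos hlt]
        rw [hx, max_eq_left (by linarith)]; ring
      · have hx : XV t ω = 0 := by
          show (if (∑ k, a t ω k * P t ω k) < r t ω then (1:ℝ) else 0) = 0
          rw [if_neg (not_lt.mpr hge)]
        rw [hx, max_eq_right (by linarith)]; ring
    show r t ω * XV t ω = _
    rw [hsumD t ω, hMval]
    linarith [hgoal]
  -- per-period value
  have hRXval : ∀ t < n, ∫ ω, RX t ω ∂μ = (∫ ω, f (P t ω) ∂μ) - ∫ ω, D t ω ∂μ := by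
    intro t ht
    have h1 : ∫ ω, RX t ω ∂μ
        = (∫ ω, M t ω ∂μ) + ((∫ ω, ∑ i, d i * P t ω i ∂μ) - ∫ ω, D t ω ∂μ) := by
      have e : ∫ ω, RX t ω ∂μ
          = ∫ ω, (M t ω + ((∑ i, d i * P t ω i) - D t ω)) ∂μ :=
        integral_congr_ae (Filter.Eventually.of_forall fun ω => hgreedy t ω)
      have i2 : Integrable (fun ω => (∑ i, d i * P t ω i) - D t ω) μ :=
        (hdPi t ht.le).sub (hDi t ht)
      rw [e, integral_add (hMi t ht) i2, integral_sub (hdPi t ht.le) (hDi t ht)]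
    have h2 : ∫ ω, f (P t ω) ∂μ
        = (∫ ω, g (P t ω) ∂μ) + ∫ ω, ∑ i, d i * P t ω i ∂μ := by
      rw [← integral_add (hgi t ht.le) (hdPi t ht.le)]
    rw [h1, hMg t ht, h2]; ring
  -- lower bound for per-period value
  have hfge : ∀ t ≤ n, c0 ≤ ∫ ω, f (P t ω) ∂μ := by
    intro t ht
    have := integral_mono_ae (integrable_const c0) (hfi t ht)
      (Filter.Eventually.of_forall fun ω => hc0le (P t ω) (hPnn t ω))
    simpa using this
  -- drift bound
  have hdrift : ∫ ω, (∑ t ∈ Finset.range n, D t ω) ∂μ ≤ c/2 * (n * (m * (abar+dbar)^2)) := by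
    have hpath : ∀ᵐ ω ∂μ, ∑ t ∈ Finset.range n, D t ω ≤ c/2 * (n * (m * (abar+dbar)^2)) := by
      filter_upwards [hAE] with ω hω
      have hv : ∀ t, t < n → ∀ i : Fin m,
          ((fun j => a j ω) t i * xIter m (fun j => r j ω) (fun j => a j ω) d (fun _ => c) t
            - d i)^2 ≤ (abar+dbar)^2 := by
        intro t ht i
        have hm0 : 0 < m := i.pos
        have ha0 : 0 ≤ abar := habar hm0
        have hai : |a t ω i| ≤ abar := (hω t ht).2 i
        have hdnn : 0 ≤ d i := hdlb.le.trans (hd i).1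
        have habs : |a t ω i * XV t ω - d i| ≤ abar + dbar := by
          rcases hX01 t ω with hx | hx <;> rw [hx]
          · rw [mul_zero, zero_sub, abs_neg, abs_of_nonneg hdnn]
            linarith [(hd i).2]
          · rw [mul_one]
            calc |a t ω i - d i| ≤ |a t ω i| + |d i| := abs_sub _ _
              _ ≤ abar + dbar := add_le_add hai
                  (by rw [abs_of_nonneg hdnn]; exact (hd i).2)
        have h2 := abs_le.mp habs
        exact sq_le_sq' (by linarith) h2.2
      have := drift_bound m n (fun j => r j ω) (fun j => a j ω) d c hcpos
        ((abar+dbar)^2) hv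
      exact this
    have hDint : Integrable (fun ω => ∑ t ∈ Finset.range n, D t ω) μ :=
      integrable_finset_sum _ fun t ht => hDi t (Finset.mem_range.mp ht)
    have := integral_mono_ae hDint (integrable_const _) hpath
    simpa using this
  -- upper bound on the LP value
  have hIntSum0 : Integrable (fun ω => ∑ t ∈ Finset.range n, RX t ω) μ :=
    integrable_finset_sum _ (fun t ht => hRXi t (Finset.mem_range.mp ht))
  have hInt' : Integrable (fun ω => LP ω - ∑ t ∈ Finset.range n, RX t ω) μ := hInt
  have hLPi : Integrable LP μ := by
    have h1 := hInt'.add hIntSum0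
    refine h1.congr (Filter.Eventually.of_forall fun ω => ?_)
    show LP ω - (∑ t ∈ Finset.range n, RX t ω) + (∑ t ∈ Finset.range n, RX t ω) = LP ω
    ring
  have hnpos : (0:ℝ) < n := by exact_mod_cast hn
  have hLPle : ∫ ω, LP ω ∂μ ≤ n * c0 := by
    have key : ∀ y, (∀ i, 0 ≤ y i) → ∫ ω, LP ω ∂μ ≤ n * f y := by
      intro y hy
      have hwd : ∀ ω, LP ω ≤ (∑ j : Fin n, h (r j.val ω, a j.val ω) y)
          + ∑ i, ((n:ℝ) * d i) * y i := by
        intro ω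
        exact weak_duality n m (fun j => r j.val ω) (fun j i => a j.val ω i)
          (fun i => (n:ℝ) * d i) y hy
          (fun i => mul_nonneg (Nat.cast_nonneg n) (hdlb.le.trans (hd i).1))
      set Cy : ℝ := rbar + ∑ i, |abar| * |y i| with hCy
      have hji : ∀ j : Fin n, Integrable (fun ω => h (r j.val ω, a j.val ω) y) μ := by
        intro j
        have hcy : Continuous fun x : ℝ × (Fin m → ℝ) => h x y :=
          hhc.comp (continuous_id.prodMk continuous_const)
        refine Integrable.mono' (integrable_const Cy)
          (hcy.stronglyMeasurable.comp_measurable (hmeas j.val j.isLt)).aestronglyMeasurable ?_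
        filter_upwards [hAE] with ω hω
        rw [Real.norm_eq_abs]
        refine le_trans (habs_max _) ?_
        calc |r j.val ω - ∑ i, a j.val ω i * y i|
            ≤ |r j.val ω| + |∑ i, a j.val ω i * y i| := abs_sub _ _
          _ ≤ rbar + ∑ i, |abar| * |y i| := by
              refine add_le_add ((hω j.val j.isLt).1) ?_
              refine le_trans (Finset.abs_sum_le_sum_abs _ _) (Finset.sum_le_sum fun i _ => ?_)
              rw [abs_mul]
              exact mul_le_mul_of_nonneg_right
                (le_trans ((hω j.val j.isLt).2 i) (le_abs_self _)) (abs_nonneg _)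
      have hsumi : Integrable (fun ω => ∑ j : Fin n, h (r j.val ω, a j.val ω) y) μ :=
        integrable_finset_sum _ fun j _ => hji j
      have step1 : ∫ ω, LP ω ∂μ ≤ ∫ ω, ((∑ j : Fin n, h (r j.val ω, a j.val ω) y)
          + ∑ i, ((n:ℝ) * d i) * y i) ∂μ :=
        integral_mono_ae hLPi (hsumi.add (integrable_const _))
          (Filter.Eventually.of_forall hwd)
      have step2 : ∫ ω, ((∑ j : Fin n, h (r j.val ω, a j.val ω) y)
          + ∑ i, ((n:ℝ) * d i) * y i) ∂μ = n * f y := by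
        rw [integral_add hsumi (integrable_const _), integral_const, probReal_univ,
          integral_finset_sum _ (fun j _ => hji j)]
        have e1 : ∀ j : Fin n, ∫ ω, h (r j.val ω, a j.val ω) y ∂μ = g y :=
          fun j => hgj j.val j.isLt y
        rw [Finset.sum_congr rfl fun j _ => e1 j]
        rw [Finset.sum_const, Finset.card_univ, Fintype.card_fin, nsmul_eq_mul]
        have e2 : ∑ i, ((n:ℝ) * d i) * y i = n * ∑ i, d i * y i := by
          rw [Finset.mul_sum]
          exact Finset.sum_congr rfl fun i _ => by ring
        simp only [ENNReal.toReal_one, smul_eq_mul, one_mul, e2, hf]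
        ring
      exact step1.trans (le_of_eq step2)
    have hdiv : (∫ ω, LP ω ∂μ) / n ≤ c0 := by
      refine le_csInf ⟨f 0, ⟨0, fun i => le_rfl, rfl⟩⟩ ?_
      rintro q ⟨y, hy, rfl⟩
      rw [div_le_iff₀ hnpos]
      calc ∫ ω, LP ω ∂μ ≤ n * f y := key y hy
        _ = f y * n := mul_comm _ _
    calc ∫ ω, LP ω ∂μ = (∫ ω, LP ω ∂μ) / n * n := by field_simp
      _ ≤ c0 * n := mul_le_mul_of_nonneg_right hdiv hnpos.le
      _ = n * c0 := mul_comm _ _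
  -- assembly
  have hsum_eq : ∫ ω, (∑ t ∈ Finset.range n, RX t ω) ∂μ = ∑ t ∈ Finset.range n, ∫ ω, RX t ω ∂μ :=
    integral_finset_sum _ (fun t ht => hRXi t (Finset.mem_range.mp ht))
  have hsumRX : n * c0 - c/2 * (n * (m * (abar+dbar)^2))
      ≤ ∑ t ∈ Finset.range n, ∫ ω, RX t ω ∂μ := by
    have e1 : ∑ t ∈ Finset.range n, ∫ ω, RX t ω ∂μ
        = (∑ t ∈ Finset.range n, ∫ ω, f (P t ω) ∂μ)
          - ∑ t ∈ Finset.range n, ∫ ω, D t ω ∂μ := by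
      rw [← Finset.sum_sub_distrib]
      exact Finset.sum_congr rfl fun t ht => hRXval t (Finset.mem_range.mp ht)
    have e2 : (n : ℝ) * c0 ≤ ∑ t ∈ Finset.range n, ∫ ω, f (P t ω) ∂μ := by
      calc (n:ℝ) * c0 = ∑ _t ∈ Finset.range n, c0 := by
            rw [Finset.sum_const, Finset.card_range, nsmul_eq_mul]
        _ ≤ _ := Finset.sum_le_sum fun t ht => hfge t (Finset.mem_range.mp ht).le
    have e3 : ∑ t ∈ Finset.range n, ∫ ω, D t ω ∂μ ≤ c/2 * (n * (m * (abar+dbar)^2)) := by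
      rw [← integral_finset_sum _ (fun t ht => hDi t (Finset.mem_range.mp ht))]
      exact hdrift
    rw [e1]; linarith
  have hIntSum : Integrable (fun ω => ∑ t ∈ Finset.range n, RX t ω) μ :=
    integrable_finset_sum _ (fun t ht => hRXi t (Finset.mem_range.mp ht))
  have hfinal : ∫ ω, (LP ω - ∑ t ∈ Finset.range n, RX t ω) ∂μ
      ≤ c/2 * (n * (m * (abar+dbar)^2)) := by
    rw [integral_sub hLPi hIntSum, hsum_eq]
    linarith
  have harith : c/2 * (n * (m * (abar+dbar)^2)) ≤ (m : ℝ) * (abar + dbar) ^ 2 * Real.sqrt n := by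
    have hcn : c * n = Real.sqrt n := by
      rw [hc, one_div, inv_mul_eq_div, Real.div_sqrt]
    have hmk : (0:ℝ) ≤ (m : ℝ) * (abar+dbar)^2 := by positivity
    nlinarith [mul_nonneg hmk hsq.le]
  exact le_trans (le_of_eq (by rfl)) (le_trans hfinal harith)
end

section
/- Fix a dataset (r_j, a_j) ∈ ℝ × ℝ^m, j = 1,…,n, with ‖a_j‖_∞ ≤ ā for all j, fix p ∈ ℝ^m, and set x_j = 1 if r_j > a_jᵀp and x_j = 0 otherwise. Let d ∈ ℝ^m and suppose Σ_{j=1}^n a_{ij} x_j ≤ n·d_i for every i = 1,…,m. Let s be an integer with max{16ā², e^{16ā²}, e} < s ≤ n and let S be a uniformly random subset of {1,…,n} of cardinality s. Then with probability at least 1 − m/s: Σ_{j∈S} a_{ij} x_j ≤ s·d_i + √s·log s simultaneously for all i = 1,…,m. -/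
set_option maxHeartbeats 1000000

open Finset

namespace Stmt10Aux

variable {α : Type*} [DecidableEq α] [Fintype α]

/-- Shelling identity: summing over size-(k+1) sets with a marked element equals
summing over size-k sets with an outside element. -/
lemma shell (k : ℕ) (g : Finset α → α → ℝ) :
    ∑ S ∈ powersetCard (k+1) (univ : Finset α), ∑ j ∈ S, g (S.erase j) j
      = ∑ R ∈ powersetCard k (univ : Finset α), ∑ j ∈ Rᶜ, g R j := by
  rw [Finset.sum_sigma', Finset.sum_sigma']
  refine Finset.sum_nbij' (fun x => ⟨x.1.erase x.2, x.2⟩)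
    (fun x => ⟨insert x.2 x.1, x.2⟩) ?_ ?_ ?_ ?_ ?_
  · rintro ⟨S, j⟩ hx
    simp only [Finset.mem_sigma, Finset.mem_powersetCard_univ] at hx ⊢
    refine ⟨?_, Finset.mem_compl.2 (Finset.notMem_erase _ _)⟩
    rw [Finset.card_erase_of_mem hx.2, hx.1]
    omega
  · rintro ⟨R, j⟩ hx
    simp only [Finset.mem_sigma, Finset.mem_powersetCard_univ, Finset.mem_compl] at hx ⊢
    exact ⟨by rw [Finset.card_insert_of_notMem hx.2, hx.1], Finset.mem_insert_self _ _⟩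
  · rintro ⟨S, j⟩ hx
    simp only [Finset.mem_sigma] at hx
    exact Sigma.ext (Finset.insert_erase hx.2) (by simp)
  · rintro ⟨R, j⟩ hx
    simp only [Finset.mem_sigma, Finset.mem_compl] at hx
    exact Sigma.ext (Finset.erase_insert hx.2) (by simp)
  · rintro ⟨S, j⟩ _
    rfl

variable {N : ℕ}

/-- Elementary symmetric sum. -/
noncomputable def E (w : Fin N → ℝ) (k : ℕ) : ℝ :=
  ∑ S ∈ powersetCard k (univ : Finset (Fin N)), ∏ j ∈ S, w j

lemma E_nonneg {w : Fin N → ℝ} (hw : ∀ j, 0 ≤ w j) (k : ℕ) : 0 ≤ E w k :=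
  Finset.sum_nonneg fun S _ => Finset.prod_nonneg fun j _ => hw j

lemma shell' (w : Fin N → ℝ) (k : ℕ) :
    ∑ R ∈ powersetCard k (univ : Finset (Fin N)), ∑ j ∈ Rᶜ, w j * ∏ x ∈ R, w x
      = ((k : ℝ) + 1) * E w (k+1) := by
  rw [← shell k (fun R j => w j * ∏ x ∈ R, w x), E, Finset.mul_sum]
  refine Finset.sum_congr rfl fun S hS => ?_
  rw [Finset.mem_powersetCard_univ] at hS
  calc ∑ j ∈ S, w j * ∏ x ∈ S.erase j, w x
      = ∑ j ∈ S, ∏ x ∈ S, w x :=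
        Finset.sum_congr rfl fun j hj => Finset.mul_prod_erase S w hj
    _ = (S.card : ℝ) * ∏ x ∈ S, w x := by
        rw [Finset.sum_const, nsmul_eq_mul]
    _ = ((k : ℝ) + 1) * ∏ x ∈ S, w x := by rw [hS]; push_cast; ring

lemma key1 (w : Fin N → ℝ) (k : ℕ) :
    (∑ j, w j) * E w k = ((k : ℝ) + 1) * E w (k+1)
      + ∑ R ∈ powersetCard k (univ : Finset (Fin N)), ∑ l ∈ R, w l * ∏ j ∈ R, w j := by
  rw [← shell' w k, E, Finset.mul_sum]
  rw [← Finset.sum_add_distrib]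
  refine Finset.sum_congr rfl fun R _ => ?_
  rw [← Finset.sum_add_sum_compl R w, add_mul, Finset.sum_mul, Finset.sum_mul]
  ring

lemma pairs (B : Finset (Fin N)) (f : Fin N → ℝ) :
    ∑ l ∈ B, (∑ j ∈ B.erase l, f j) * f l ≤ ((B.card : ℝ) - 1) * ∑ l ∈ B, (f l)^2 := by
  have h1 : ∑ l ∈ B, (∑ j ∈ B.erase l, f j) * f l
      = (∑ j ∈ B, f j)^2 - ∑ l ∈ B, (f l)^2 := by
    have : ∀ l ∈ B, (∑ j ∈ B.erase l, f j) * f l = (∑ j ∈ B, f j) * f l - (f l)^2 := by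
      intro l hl
      rw [Finset.sum_erase_eq_sub hl]
      ring
    rw [Finset.sum_congr rfl this, Finset.sum_sub_distrib, ← Finset.mul_sum, sq]
  have h2 : (∑ j ∈ B, f j)^2 ≤ (B.card : ℝ) * ∑ l ∈ B, (f l)^2 := by
    have := sq_sum_le_card_mul_sum_sq (s := B) (f := f)
    exact_mod_cast this
  linarith

lemma key2 (w : Fin N → ℝ) (hw : ∀ j, 0 ≤ w j) (q : ℕ) (hq : q + 2 ≤ N) :
    ((q : ℝ) + 1) * (((q : ℝ) + 2) * E w (q+2))
      ≤ ((N - (q+1) : ℕ) : ℝ)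
        * ∑ R ∈ powersetCard (q+1) (univ : Finset (Fin N)), ∑ l ∈ R, w l * ∏ j ∈ R, w j := by
  -- rewrite T through the shelling identity
  have hT : ∑ R ∈ powersetCard (q+1) (univ : Finset (Fin N)), ∑ l ∈ R, w l * ∏ j ∈ R, w j
      = ∑ Q ∈ powersetCard q (univ : Finset (Fin N)), ∑ l ∈ Qᶜ, (w l)^2 * ∏ j ∈ Q, w j := by
    rw [← shell q (fun Q l => (w l)^2 * ∏ j ∈ Q, w j)]
    refine Finset.sum_congr rfl fun R _ => Finset.sum_congr rfl fun l hl => ?_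
    rw [← Finset.mul_prod_erase R w hl]
    ring
  -- rewrite the LHS through the shelling identity (twice)
  have hL : ((q : ℝ) + 1) * (((q : ℝ) + 2) * E w (q+2))
      = ∑ Q ∈ powersetCard q (univ : Finset (Fin N)),
          ∑ l ∈ Qᶜ, (∑ j ∈ (insert l Q)ᶜ, w j) * (w l * ∏ x ∈ Q, w x) := by
    rw [show ((q:ℝ)+2) = ((q+1 : ℕ) : ℝ) + 1 by push_cast; ring, ← shell' w (q+1),
      ← shell q (fun Q l => (∑ j ∈ (insert l Q)ᶜ, w j) * (w l * ∏ x ∈ Q, w x)),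
      Finset.mul_sum]
    refine Finset.sum_congr rfl fun R hR => ?_
    rw [Finset.mem_powersetCard_univ] at hR
    have : ∀ l ∈ R, (∑ j ∈ (insert l (R.erase l))ᶜ, w j) * (w l * ∏ x ∈ R.erase l, w x)
        = (∑ j ∈ Rᶜ, w j) * ∏ x ∈ R, w x := by
      intro l hl
      rw [Finset.insert_erase hl, Finset.mul_prod_erase R w hl]
    rw [Finset.sum_congr rfl this, Finset.sum_const, nsmul_eq_mul, hR,
      Finset.sum_mul]
    push_cast
    ring_nf
    simp only [mul_comm]
  rw [hL, hT, Finset.mul_sum]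
  refine Finset.sum_le_sum fun Q hQ => ?_
  rw [Finset.mem_powersetCard_univ] at hQ
  have hcard : ((Qᶜ.card : ℝ)) - 1 = ((N - (q+1) : ℕ) : ℝ) := by
    rw [Finset.card_compl, hQ, Fintype.card_fin, Nat.cast_sub (by omega),
      Nat.cast_sub (by omega)]
    push_cast
    ring
  have hP : 0 ≤ ∏ x ∈ Q, w x := Finset.prod_nonneg fun j _ => hw j
  calc ∑ l ∈ Qᶜ, (∑ j ∈ (insert l Q)ᶜ, w j) * (w l * ∏ x ∈ Q, w x)
      = (∑ l ∈ Qᶜ, (∑ j ∈ Qᶜ.erase l, w j) * w l) * ∏ x ∈ Q, w x := by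
        rw [Finset.sum_mul]
        refine Finset.sum_congr rfl fun l hl => ?_
        rw [Finset.compl_insert]
        ring
    _ ≤ (((Qᶜ.card : ℝ) - 1) * ∑ l ∈ Qᶜ, (w l)^2) * ∏ x ∈ Q, w x := by
        refine mul_le_mul_of_nonneg_right (pairs Qᶜ w) hP
    _ = ((N - (q+1) : ℕ) : ℝ) * ∑ l ∈ Qᶜ, (w l)^2 * ∏ j ∈ Q, w j := by
        rw [hcard, ← Finset.sum_mul]
        ring

lemma step (w : Fin N → ℝ) (hw : ∀ j, 0 ≤ w j) (q : ℕ) (hq : q + 2 ≤ N) :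
    (N : ℝ) * (((q : ℝ) + 2) * E w (q+2))
      ≤ ((N - (q+1) : ℕ) : ℝ) * ((∑ j, w j) * E w (q+1)) := by
  have k1 := key1 w (q+1)
  have k2 := key2 w hw q hq
  have hT : 0 ≤ ∑ R ∈ powersetCard (q+1) (univ : Finset (Fin N)),
      ∑ l ∈ R, w l * ∏ j ∈ R, w j :=
    Finset.sum_nonneg fun R _ => Finset.sum_nonneg fun l _ =>
      mul_nonneg (hw l) (Finset.prod_nonneg fun j _ => hw j)
  have hcast : ((N - (q+1) : ℕ) : ℝ) = (N : ℝ) - ((q : ℝ) + 1) := by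
    rw [Nat.cast_sub (by omega)]
    push_cast
    ring
  have hE2 : 0 ≤ E w (q+2) := E_nonneg hw _
  have hpush : ((q+1 : ℕ) : ℝ) + 1 = (q : ℝ) + 2 := by push_cast; ring
  have hEeq : E w (q+1+1) = E w (q+2) := by norm_num
  rw [hpush, hEeq] at k1
  rw [hcast] at k2 ⊢
  set T := ∑ R ∈ powersetCard (q+1) (univ : Finset (Fin N)),
      ∑ l ∈ R, w l * ∏ j ∈ R, w j with hTdef
  calc (N : ℝ) * (((q : ℝ) + 2) * E w (q+2))
      = ((N:ℝ) - ((q:ℝ)+1)) * (((q:ℝ)+2) * E w (q+2))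
          + ((q:ℝ)+1) * (((q:ℝ)+2) * E w (q+2)) := by ring
    _ ≤ ((N:ℝ) - ((q:ℝ)+1)) * (((q:ℝ)+2) * E w (q+2)) + ((N:ℝ) - ((q:ℝ)+1)) * T := by
        linarith
    _ = ((N:ℝ) - ((q:ℝ)+1)) * ((∑ j, w j) * E w (q+1)) := by rw [k1]; ring

lemma maclaurin (w : Fin N → ℝ) (hw : ∀ j, 0 ≤ w j) :
    ∀ k, k ≤ N → E w k * (N : ℝ)^k ≤ (N.choose k : ℝ) * (∑ j, w j)^k := by
  have hw0 : 0 ≤ ∑ j, w j := Finset.sum_nonneg fun j _ => hw j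
  intro k
  induction k with
  | zero => simp [E]
  | succ q ih =>
    intro hq
    match q, ih with
    | 0, _ =>
      have hE1 : E w 1 = ∑ j, w j := by
        rw [E, Finset.powersetCard_one, Finset.sum_map]
        simp
      rw [hE1, Nat.choose_one_right]
      ring_nf
      exact le_refl _
    | p+1, ih =>
      have hstep := step w hw p (by omega)
      have ihp := ih (by omega)
      have hNn : (0:ℝ) ≤ (N:ℝ) ^ (p+1) := by positivity
      have hNc : 0 ≤ ((N - (p+1) : ℕ) : ℝ) := Nat.cast_nonneg _
      have hp2 : (0:ℝ) < (p : ℝ) + 2 := by positivity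
      rw [← mul_le_mul_iff_right₀ hp2]
      have hcc : ((N.choose (p+2) : ℝ)) * ((p:ℝ)+2) = (N.choose (p+1) : ℝ) * ((N - (p+1) : ℕ) : ℝ) := by
        exact_mod_cast congrArg (Nat.cast (R := ℝ)) (Nat.choose_succ_right_eq N (p+1))
      calc ((p:ℝ)+2) * (E w (p+2) * (N:ℝ)^(p+2))
          = ((N : ℝ) * (((p : ℝ) + 2) * E w (p+2))) * (N:ℝ)^(p+1) := by ring
        _ ≤ (((N - (p+1) : ℕ) : ℝ) * ((∑ j, w j) * E w (p+1))) * (N:ℝ)^(p+1) :=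
            mul_le_mul_of_nonneg_right hstep hNn
        _ = (((N - (p+1) : ℕ) : ℝ) * (∑ j, w j)) * (E w (p+1) * (N:ℝ)^(p+1)) := by ring
        _ ≤ (((N - (p+1) : ℕ) : ℝ) * (∑ j, w j)) * ((N.choose (p+1) : ℝ) * (∑ j, w j)^(p+1)) := by
            exact mul_le_mul_of_nonneg_left ihp (mul_nonneg hNc hw0)
        _ = ((N.choose (p+1) : ℝ) * ((N - (p+1) : ℕ) : ℝ)) * (∑ j, w j)^(p+2) := by ring
        _ = ((p:ℝ)+2) * ((N.choose (p+2) : ℝ) * (∑ j, w j)^(p+2)) := by rw [← hcc]; ring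

lemma maclaurin' (w : Fin N → ℝ) (hw : ∀ j, 0 ≤ w j) (s : ℕ) (hs : s ≤ N)
    (Q : ℝ) (hQ0 : 0 ≤ Q) (hQ : ∑ j, w j ≤ (N : ℝ) * Q) :
    ∑ S ∈ powersetCard s (univ : Finset (Fin N)), ∏ j ∈ S, w j
      ≤ (N.choose s : ℝ) * Q^s := by
  rcases Nat.eq_zero_or_pos N with hN | hN
  · subst hN
    interval_cases s
    simp
  · have hw0 : 0 ≤ ∑ j, w j := Finset.sum_nonneg fun j _ => hw j
    have h1 := maclaurin w hw s hs
    have h2 : (∑ j, w j)^s ≤ ((N : ℝ) * Q)^s := pow_le_pow_left₀ hw0 hQ s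
    have hNpos : (0:ℝ) < (N:ℝ)^s := by positivity
    have : E w s * (N : ℝ)^s ≤ ((N.choose s : ℝ) * Q^s) * (N:ℝ)^s := by
      calc E w s * (N : ℝ)^s ≤ (N.choose s : ℝ) * (∑ j, w j)^s := h1
        _ ≤ (N.choose s : ℝ) * ((N : ℝ) * Q)^s :=
            mul_le_mul_of_nonneg_left h2 (Nat.cast_nonneg _)
        _ = ((N.choose s : ℝ) * Q^s) * (N:ℝ)^s := by rw [mul_pow]; ring
    exact le_of_mul_le_mul_right this hNpos

end Stmt10Aux

/-- (Claim (ii) in the proof of Proposition 1.) Fix a dual price `p`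
and threshold decisions `x_j = 1{r_j > a_jᵀp}` satisfying the full-horizon constraints
`Σ_j a_{ij} x_j ≤ n d_i`. If `max{16ā², e^{16ā²}, e} < s ≤ n` and `S` is a uniformly
random size-`s` subset of `{1,…,n}`, then with probability at least `1 − m/s` one has
`Σ_{j∈S} a_{ij} x_j ≤ s d_i + √s log s` simultaneously for all `i`; i.e. the number of
size-`s` subsets satisfying all `m` relaxed constraints is at least `(1 − m/s)·C(n,s)`. -/
theorem stmt10 (m n : ℕ) (r : Fin n → ℝ) (a : Fin n → Fin m → ℝ)
    (abar : ℝ) (ha : ∀ j i, |a j i| ≤ abar)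
    (p : Fin m → ℝ) (d : Fin m → ℝ)
    (hfeas : ∀ i, ∑ j, a j i * (if (∑ k, a j k * p k) < r j then (1 : ℝ) else 0) ≤
      (n : ℝ) * d i)
    (s : ℕ) (hs : s ≤ n)
    (hslb : max (max (16 * abar ^ 2) (Real.exp (16 * abar ^ 2))) (Real.exp 1) < s) :
    (1 - (m : ℝ) / s) * (Nat.choose n s : ℝ) ≤
      (({S : Finset (Fin n) | S.card = s ∧ ∀ i,
          ∑ j ∈ S, a j i * (if (∑ k, a j k * p k) < r j then (1 : ℝ) else 0) ≤
            (s : ℝ) * d i + Real.sqrt s * Real.log s}).ncard : ℝ) := by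
  classical
  have he : Real.exp 1 < (s : ℝ) := lt_of_le_of_lt (le_max_right _ _) hslb
  have hm1 : Real.exp (16 * abar ^ 2) < (s : ℝ) :=
    lt_of_le_of_lt ((le_max_right _ _).trans (le_max_left _ _)) hslb
  have hsR : (0 : ℝ) < s := lt_trans (Real.exp_pos 1) he
  have hs0 : 0 < s := by exact_mod_cast hsR
  have hn : 0 < n := lt_of_lt_of_le hs0 hs
  set L : ℝ := Real.log (s : ℝ) with hL_def
  have hL1 : 1 < L := by
    rw [hL_def, ← Real.log_exp 1]
    exact Real.log_lt_log (Real.exp_pos 1) he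
  have hL0 : 0 < L := lt_trans one_pos hL1
  have hL16 : 16 * abar ^ 2 < L := by
    rw [hL_def, ← Real.log_exp (16 * abar ^ 2)]
    exact Real.log_lt_log (Real.exp_pos _) hm1
  have hLs : L ≤ (s : ℝ) := Real.log_le_self hsR.le
  have hsq : 0 < Real.sqrt s := Real.sqrt_pos.2 hsR
  have hss : Real.sqrt s * Real.sqrt s = (s : ℝ) := Real.mul_self_sqrt hsR.le
  set c : ℝ := max abar (L / (4 * Real.sqrt s)) with hc_def
  have hc0 : 0 < c := lt_max_of_lt_right (by positivity)
  have hcL : L / (4 * Real.sqrt s) ≤ c := le_max_right _ _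
  have habc : abar ≤ c := le_max_left _ _
  have hc16 : 16 * c ^ 2 ≤ L := by
    rcases max_cases abar (L / (4 * Real.sqrt s)) with ⟨h1, _⟩ | ⟨h1, _⟩
    · rw [hc_def, h1]; exact hL16.le
    · rw [hc_def, h1]
      have h4 : 16 * (L / (4 * Real.sqrt s)) ^ 2 = L ^ 2 / (s : ℝ) := by
        rw [div_pow, mul_pow]
        rw [show (Real.sqrt ↑s) ^ 2 = (s : ℝ) by rw [sq, hss]]
        field_simp
        ring
      rw [h4, div_le_iff₀ hsR]
      nlinarith [hL0, hLs]
  set lam : ℝ := L / (4 * c ^ 2 * Real.sqrt s) with hlam_def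
  have hlam0 : 0 < lam := by rw [hlam_def]; positivity
  have hlamc : lam * c ≤ 1 := by
    have h1 : lam * c = L / (4 * c * Real.sqrt s) := by
      rw [hlam_def]; field_simp
    rw [h1, div_le_one (by positivity)]
    calc L = (L / (4 * Real.sqrt s)) * (4 * Real.sqrt s) := by field_simp
      _ ≤ c * (4 * Real.sqrt s) := mul_le_mul_of_nonneg_right hcL (by positivity)
      _ = 4 * c * Real.sqrt s := by ring
  -- the bad sets for each constraint
  set Bi : Fin m → Finset (Finset (Fin n)) := fun i =>
    (Finset.powersetCard s (Finset.univ : Finset (Fin n))).filter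
      (fun S => ¬ (∑ j ∈ S, a j i * (if (∑ k, a j k * p k) < r j then (1 : ℝ) else 0) ≤
        (s : ℝ) * d i + Real.sqrt s * L)) with hBi_def
  have key : ∀ i : Fin m, ((Bi i).card : ℝ) * (s : ℝ) ≤ (n.choose s : ℝ) := by
    intro i
    set v : Fin n → ℝ :=
      fun j => a j i * (if (∑ k, a j k * p k) < r j then (1 : ℝ) else 0) with hv_def
    have habar0 : 0 ≤ abar := le_trans (abs_nonneg _) (ha ⟨0, hn⟩ i)
    have hvc : ∀ j, |v j| ≤ c := by
      intro j
      refine le_trans ?_ habc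
      simp only [hv_def]
      rw [abs_mul]
      have hite : |(if (∑ k, a j k * p k) < r j then (1 : ℝ) else 0)| ≤ 1 := by
        split_ifs <;> simp
      calc |a j i| * |(if (∑ k, a j k * p k) < r j then (1 : ℝ) else 0)|
          ≤ abar * 1 := mul_le_mul (ha j i) hite (abs_nonneg _) habar0
        _ = abar := mul_one _
    set w : Fin n → ℝ := fun j => Real.exp (lam * v j) with hw_def
    have hw0 : ∀ j, 0 ≤ w j := fun j => (Real.exp_pos _).le
    have hwle : ∀ j, w j ≤ 1 + lam * v j + lam ^ 2 * c ^ 2 := by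
      intro j
      have h1 : |lam * v j| ≤ 1 := by
        rw [abs_mul, abs_of_pos hlam0]
        exact le_trans (mul_le_mul_of_nonneg_left (hvc j) hlam0.le) hlamc
      have h2 := (abs_le.mp (Real.abs_exp_sub_one_sub_id_le h1)).2
      have h3 : (lam * v j) ^ 2 ≤ lam ^ 2 * c ^ 2 := by
        rw [mul_pow]
        have hv2 : (v j) ^ 2 ≤ c ^ 2 := by
          rw [← sq_abs]
          exact pow_le_pow_left₀ (abs_nonneg _) (hvc j) 2
        exact mul_le_mul_of_nonneg_left hv2 (by positivity)
      have : Real.exp (lam * v j) - 1 - lam * v j ≤ lam ^ 2 * c ^ 2 := le_trans h2 h3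
      simp only [hw_def]
      linarith
    set QQ : ℝ := 1 + lam * d i + lam ^ 2 * c ^ 2 with hQQ_def
    have hvd : ∑ j, v j ≤ (n : ℝ) * d i := by
      simp only [hv_def]
      exact hfeas i
    have hnR : (0 : ℝ) < n := by exact_mod_cast hn
    have hdc : -c ≤ d i := by
      have h1 : -((n : ℝ) * c) ≤ ∑ j, v j := by
        calc -((n : ℝ) * c) = ∑ _j : Fin n, (-c) := by
              rw [Finset.sum_const, Finset.card_univ, Fintype.card_fin, nsmul_eq_mul]; ring
          _ ≤ ∑ j, v j := Finset.sum_le_sum fun j _ => (abs_le.mp (hvc j)).1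
      nlinarith [le_trans h1 hvd]
    have hQQ0 : 0 ≤ QQ := by
      have := mul_le_mul_of_nonneg_left hdc hlam0.le
      rw [hQQ_def]
      nlinarith [sq_nonneg (lam * c)]
    have hsumw : ∑ j, w j ≤ (n : ℝ) * QQ := by
      calc ∑ j, w j ≤ ∑ j, (1 + lam * v j + lam ^ 2 * c ^ 2) :=
            Finset.sum_le_sum fun j _ => hwle j
        _ = (n : ℝ) + lam * (∑ j, v j) + (n : ℝ) * (lam ^ 2 * c ^ 2) := by
            rw [Finset.sum_add_distrib, Finset.sum_add_distrib, Finset.sum_const,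
              Finset.sum_const, Finset.card_univ, Fintype.card_fin, ← Finset.mul_sum]
            push_cast
            ring
        _ ≤ (n : ℝ) + lam * ((n : ℝ) * d i) + (n : ℝ) * (lam ^ 2 * c ^ 2) := by
            have := mul_le_mul_of_nonneg_left hvd hlam0.le
            linarith
        _ = (n : ℝ) * QQ := by rw [hQQ_def]; ring
    have hmac := Stmt10Aux.maclaurin' w hw0 s hs QQ hQQ0 hsumw
    set β : ℝ := lam * ((s : ℝ) * d i + Real.sqrt s * L) with hβ_def
    have hcount : ((Bi i).card : ℝ) * Real.exp β
        ≤ ∑ S ∈ Finset.powersetCard s (Finset.univ : Finset (Fin n)), ∏ j ∈ S, w j := by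
      have hbadS : ∀ S ∈ Bi i, Real.exp β ≤ ∏ j ∈ S, w j := by
        intro S hS
        rw [hBi_def, Finset.mem_filter] at hS
        have h2 : (s : ℝ) * d i + Real.sqrt s * L < ∑ j ∈ S, v j := by
          simp only [hv_def]
          exact lt_of_not_ge hS.2
        have h1 : β ≤ lam * ∑ j ∈ S, v j :=
          mul_le_mul_of_nonneg_left h2.le hlam0.le
        calc Real.exp β ≤ Real.exp (lam * ∑ j ∈ S, v j) := Real.exp_le_exp.2 h1
          _ = ∏ j ∈ S, w j := by rw [Finset.mul_sum, Real.exp_sum]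
      calc ((Bi i).card : ℝ) * Real.exp β = ∑ _S ∈ Bi i, Real.exp β := by
            rw [Finset.sum_const, nsmul_eq_mul]
        _ ≤ ∑ S ∈ Bi i, ∏ j ∈ S, w j := Finset.sum_le_sum hbadS
        _ ≤ ∑ S ∈ Finset.powersetCard s (Finset.univ : Finset (Fin n)), ∏ j ∈ S, w j := by
            refine Finset.sum_le_sum_of_subset_of_nonneg ?_
              (fun S _ _ => Finset.prod_nonneg fun j _ => hw0 j)
            rw [hBi_def]
            exact Finset.filter_subset _ _
    have hQQexp : QQ ≤ Real.exp (lam * d i + lam ^ 2 * c ^ 2) := by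
      have := Real.add_one_le_exp (lam * d i + lam ^ 2 * c ^ 2)
      rw [hQQ_def]
      linarith
    have hC0 : (0 : ℝ) ≤ (n.choose s : ℝ) := Nat.cast_nonneg _
    have hmain : ((Bi i).card : ℝ) * Real.exp β
        ≤ (n.choose s : ℝ) * Real.exp ((s : ℝ) * (lam * d i + lam ^ 2 * c ^ 2)) := by
      calc ((Bi i).card : ℝ) * Real.exp β
          ≤ (n.choose s : ℝ) * QQ ^ s := le_trans hcount hmac
        _ ≤ (n.choose s : ℝ) * (Real.exp (lam * d i + lam ^ 2 * c ^ 2)) ^ s :=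
            mul_le_mul_of_nonneg_left (pow_le_pow_left₀ hQQ0 hQQexp s) hC0
        _ = _ := by rw [← Real.exp_nat_mul]
    have h1 : lam * Real.sqrt s = L / (4 * c ^ 2) := by
      rw [hlam_def]
      field_simp
    have h2 : (s : ℝ) * lam ^ 2 * c ^ 2 = L ^ 2 / (16 * c ^ 2) := by
      rw [hlam_def, div_pow, mul_pow, mul_pow]
      rw [show (Real.sqrt ↑s) ^ 2 = (s : ℝ) by rw [sq, hss]]
      field_simp
      ring
    have harith : (s : ℝ) * (lam * d i + lam ^ 2 * c ^ 2) - β ≤ -L := by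
      have hexp : (s : ℝ) * (lam * d i + lam ^ 2 * c ^ 2) - β
          = (s : ℝ) * lam ^ 2 * c ^ 2 - (lam * Real.sqrt s) * L := by
        rw [hβ_def]; ring
      rw [hexp, h1, h2]
      have h3 : 16 * c ^ 2 * L ≤ 3 * L ^ 2 := by nlinarith [hc16, hL1, hL0]
      have h4 : L ^ 2 / (16 * c ^ 2) - L / (4 * c ^ 2) * L + L
          = (16 * c ^ 2 * L - 3 * L ^ 2) / (16 * c ^ 2) := by field_simp; ring
      have h5 : (16 * c ^ 2 * L - 3 * L ^ 2) / (16 * c ^ 2) ≤ 0 := by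
        rw [div_le_iff₀ (by positivity : (0:ℝ) < 16 * c ^ 2)]
        nlinarith
      linarith
    have hkey : ((Bi i).card : ℝ) ≤ (n.choose s : ℝ) * Real.exp (-L) := by
      have hexpβ : (0 : ℝ) < Real.exp β := Real.exp_pos _
      have h5 : ((Bi i).card : ℝ)
          ≤ (n.choose s : ℝ) * Real.exp ((s : ℝ) * (lam * d i + lam ^ 2 * c ^ 2) - β) := by
        rw [Real.exp_sub, ← mul_div_assoc, le_div_iff₀ hexpβ]
        exact hmain
      exact le_trans h5 (mul_le_mul_of_nonneg_left (Real.exp_le_exp.2 harith) hC0)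
    have hexpL : Real.exp (-L) = 1 / (s : ℝ) := by
      rw [hL_def, Real.exp_neg, Real.exp_log hsR, one_div]
    rw [hexpL] at hkey
    calc ((Bi i).card : ℝ) * (s : ℝ)
        ≤ ((n.choose s : ℝ) * (1 / (s : ℝ))) * (s : ℝ) :=
          mul_le_mul_of_nonneg_right hkey hsR.le
      _ = (n.choose s : ℝ) := by field_simp
  -- union bound and conclusion
  set P : Finset (Fin n) → Prop := fun S => ∀ i,
    ∑ j ∈ S, a j i * (if (∑ k, a j k * p k) < r j then (1 : ℝ) else 0) ≤
      (s : ℝ) * d i + Real.sqrt s * L with hP_def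
  set G : Finset (Finset (Fin n)) :=
    (Finset.powersetCard s (Finset.univ : Finset (Fin n))).filter P with hG_def
  set Bad : Finset (Finset (Fin n)) :=
    (Finset.powersetCard s (Finset.univ : Finset (Fin n))).filter (fun S => ¬ P S) with hBad_def
  have hset : {S : Finset (Fin n) | S.card = s ∧ ∀ i,
      ∑ j ∈ S, a j i * (if (∑ k, a j k * p k) < r j then (1 : ℝ) else 0) ≤
        (s : ℝ) * d i + Real.sqrt s * L} = ↑G := by
    ext S
    simp only [hG_def, Finset.coe_filter, Set.mem_setOf_eq, Finset.mem_powersetCard_univ,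
      hP_def]
  rw [hset, Set.ncard_coe_finset]
  have hsub : Bad ⊆ Finset.univ.biUnion Bi := by
    intro S hS
    rw [hBad_def, Finset.mem_filter] at hS
    obtain ⟨hS1, hS2⟩ := hS
    rw [hP_def, not_forall] at hS2
    obtain ⟨i, hi⟩ := hS2
    refine Finset.mem_biUnion.2 ⟨i, Finset.mem_univ _, ?_⟩
    rw [hBi_def]
    exact Finset.mem_filter.2 ⟨hS1, hi⟩
  have hBadcard : (Bad.card : ℝ) ≤ (m : ℝ) * ((n.choose s : ℝ) / (s : ℝ)) := by
    calc (Bad.card : ℝ) ≤ ((Finset.univ.biUnion Bi).card : ℝ) := by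
          exact_mod_cast Finset.card_le_card hsub
      _ ≤ ∑ i : Fin m, ((Bi i).card : ℝ) := by exact_mod_cast Finset.card_biUnion_le
      _ ≤ ∑ _i : Fin m, (n.choose s : ℝ) / (s : ℝ) := Finset.sum_le_sum fun i _ => by
          rw [le_div_iff₀ hsR]; exact key i
      _ = (m : ℝ) * ((n.choose s : ℝ) / (s : ℝ)) := by
          rw [Finset.sum_const, Finset.card_univ, Fintype.card_fin, nsmul_eq_mul]
  have hcards : (G.card : ℝ) + (Bad.card : ℝ) = (n.choose s : ℝ) := by
    have h := Finset.card_filter_add_card_filter_not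
      (s := Finset.powersetCard s (Finset.univ : Finset (Fin n))) (p := P)
    rw [Finset.card_powersetCard, Finset.card_univ, Fintype.card_fin] at h
    rw [hG_def, hBad_def]
    exact_mod_cast h
  have hring : (1 - (m : ℝ) / s) * (n.choose s : ℝ)
      = (n.choose s : ℝ) - (m : ℝ) * ((n.choose s : ℝ) / (s : ℝ)) := by ring
  linarith
end

section
/- Fix (r_j, a_j) ∈ ℝ × ℝ^m, j = 1,…,s, with |r_j| ≤ r̄ for all j, and let d ∈ ℝ^m satisfy d_i ≥ d̲ > 0 for all i. For ε ≥ 0 let R*(s, ε) denote the optimal value of the LP: maximize Σ_{j=1}^s r_j x_j over x ∈ [0,1]^s subject to Σ_{j=1}^s a_{ij} x_j ≤ s·d_i + ε for i = 1,…,m. Then for s ≥ 1: R*(s, √s·log s) ≤ R*(s, 0) + r̄·√s·log s/d̲. -/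
/-- (Claim (iii) in the proof of Proposition 1.) Relaxing every
capacity of the scaled LP by `√s log s` increases its optimal value by at most
`r̄ √s log s / d̲`: here `R*(s, ε)` is the optimal value of
`max Σ_j r_j x_j  s.t.  Σ_j a_{ij} x_j ≤ s d_i + ε, x ∈ [0,1]^s`. -/
theorem stmt11 (m s : ℕ) (hs : 1 ≤ s)
    (r : Fin s → ℝ) (a : Fin s → Fin m → ℝ)
    (rbar dlb : ℝ) (hdlb : 0 < dlb) (hr : ∀ j, |r j| ≤ rbar)
    (d : Fin m → ℝ) (hd : ∀ i, dlb ≤ d i) :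
    LPval s m r a (fun i => (s : ℝ) * d i + Real.sqrt s * Real.log s) ≤
      LPval s m r a (fun i => (s : ℝ) * d i + 0) +
        rbar * Real.sqrt s * Real.log s / dlb := by
  set ε := Real.sqrt s * Real.log s with hε
  have hsR : (1:ℝ) ≤ (s:ℝ) := by exact_mod_cast hs
  have hεnn : 0 ≤ ε := mul_nonneg (Real.sqrt_nonneg _) (Real.log_nonneg hsR)
  have hrbar : 0 ≤ rbar := le_trans (abs_nonneg _) (hr ⟨0, hs⟩)
  have hA : 0 < (s:ℝ) * dlb := mul_pos (lt_of_lt_of_le one_pos hsR) hdlb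
  have hden : 0 < (s:ℝ) * dlb + ε := by linarith
  set θ := ((s:ℝ) * dlb) / ((s:ℝ) * dlb + ε) with hθ
  have hθpos : 0 < θ := div_pos hA hden
  have hθle : θ ≤ 1 := by rw [hθ, div_le_one hden]; linarith
  -- upper bound on base objective for BddAbove
  have hbdd : BddAbove ((fun x : Fin s → ℝ => ∑ j, r j * x j) ''
      {x | (∀ j, 0 ≤ x j ∧ x j ≤ 1) ∧
        ∀ i, ∑ j, a j i * x j ≤ (s : ℝ) * d i + 0}) := by
    refine ⟨∑ j, |r j|, ?_⟩
    rintro y ⟨x, ⟨hx01, _⟩, rfl⟩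
    refine Finset.sum_le_sum fun j _ => ?_
    calc r j * x j ≤ |r j * x j| := le_abs_self _
      _ = |r j| * |x j| := abs_mul _ _
      _ ≤ |r j| * 1 := by
          refine mul_le_mul_of_nonneg_left ?_ (abs_nonneg _)
          rw [abs_of_nonneg (hx01 j).1]; exact (hx01 j).2
      _ = |r j| := mul_one _
  unfold LPval
  refine csSup_le ?_ ?_
  · refine ⟨∑ j, r j * (0:ℝ), ⟨fun _ => 0, ⟨fun j => by norm_num, fun i => ?_⟩, rfl⟩⟩
    simp only [mul_zero, Finset.sum_const_zero]
    have := hd i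
    nlinarith
  · rintro y ⟨x, ⟨hx01, hxc⟩, rfl⟩
    -- scaled point is feasible for base problem
    have hfeas : (fun j => θ * x j) ∈
        {x : Fin s → ℝ | (∀ j, 0 ≤ x j ∧ x j ≤ 1) ∧
          ∀ i, ∑ j, a j i * x j ≤ (s : ℝ) * d i + 0} := by
      constructor
      · intro j
        constructor
        · exact mul_nonneg hθpos.le (hx01 j).1
        · calc θ * x j ≤ 1 * 1 :=
              mul_le_mul hθle (hx01 j).2 (hx01 j).1 one_pos.le
            _ = 1 := one_mul 1
      · intro i
        have h1 : ∑ j, a j i * (θ * x j) = θ * ∑ j, a j i * x j := by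
          rw [Finset.mul_sum]; congr 1; ext j; ring
        rw [h1]
        have h2 : θ * (∑ j, a j i * x j) ≤ θ * ((s:ℝ) * d i + ε) :=
          mul_le_mul_of_nonneg_left (hxc i) hθpos.le
        have h3 : θ * ((s:ℝ) * d i + ε) ≤ (s:ℝ) * d i + 0 := by
          rw [hθ, div_mul_eq_mul_div, div_le_iff₀ hden]
          have hdi := hd i
          have hsnn : (0:ℝ) ≤ (s:ℝ) := by linarith
          nlinarith [mul_nonneg hsnn hεnn]
        linarith
    have hle : ∑ j, r j * (θ * x j) ≤
        LPval s m r a (fun i => (s : ℝ) * d i + 0) :=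
      le_csSup hbdd ⟨_, hfeas, rfl⟩
    have hsum : ∑ j, r j * (θ * x j) = θ * ∑ j, r j * x j := by
      rw [Finset.mul_sum]; congr 1; ext j; ring
    have hobj : ∑ j, r j * x j ≤ (s:ℝ) * rbar := by
      calc ∑ j, r j * x j ≤ ∑ _j : Fin s, rbar := by
            refine Finset.sum_le_sum fun j _ => ?_
            calc r j * x j ≤ |r j * x j| := le_abs_self _
              _ = |r j| * |x j| := abs_mul _ _
              _ ≤ rbar * 1 := by
                  refine mul_le_mul (hr j) ?_ (abs_nonneg _) hrbar
                  rw [abs_of_nonneg (hx01 j).1]; exact (hx01 j).2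
              _ = rbar := mul_one _
        _ = (s:ℝ) * rbar := by simp [Finset.sum_const, nsmul_eq_mul]
    have hgap : (1 - θ) * (∑ j, r j * x j) ≤ rbar * ε / dlb := by
      have h1θ : 1 - θ = ε / ((s:ℝ) * dlb + ε) := by
        rw [hθ]; field_simp; ring
      have h1θnn : 0 ≤ 1 - θ := by linarith
      calc (1 - θ) * (∑ j, r j * x j) ≤ (1 - θ) * ((s:ℝ) * rbar) :=
            mul_le_mul_of_nonneg_left hobj h1θnn
        _ = ε * ((s:ℝ) * rbar) / ((s:ℝ) * dlb + ε) := by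
            rw [h1θ]; ring
        _ ≤ rbar * ε / dlb := by
            rw [div_le_div_iff₀ hden hdlb]
            nlinarith [mul_nonneg hrbar (mul_nonneg hεnn hεnn)]
    have heq : rbar * Real.sqrt s * Real.log s / dlb = rbar * ε / dlb := by
      rw [hε]; ring
    show ∑ j, r j * x j ≤
      LPval s m r a (fun i => (s : ℝ) * d i + 0) +
        rbar * Real.sqrt s * Real.log s / dlb
    rw [heq]
    have hθle' : θ * (∑ j, r j * x j) ≤
        LPval s m r a (fun i => (s : ℝ) * d i + 0) := hsum ▸ hle
    nlinarith [hgap, hθle']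
end
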